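/- arXiv:1707.01331 — 9 statements merged into one kernel-verified Lean document; each statement's English description precedes it below -/
import Mathlib

section
/- Let {X_n : n ∈ ℕ} be a process with a 1-max-regenerative structure such that μ := E[Y_1] < ∞, and suppose that P(ζ_0 > max_{1≤k≤n} ζ_k) → 0 as n → ∞. Define G(x) := P(ζ_1 ≤ x)^{1/μ} for x ∈ ℝ. Then sup_{x∈ℝ} |P(M_n ≤ x) − G(x)^n| → 0 as n → ∞, where M_n denotes max{X_k : 1 ≤ k ≤ n}. -/
open MeasureTheory ProbabilityTheory Filter
open scoped ENNReal

/-- The `k`-th largest element (0-indexed: `k = 0` is the maximum) of a list of reals,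
as an extended real; `⊥ = -∞` if the list has at most `k` elements. -/
noncomputable def kthLargest (l : List ℝ) (k : ℕ) : EReal :=
  ((l.insertionSort (· ≥ ·))[k]?).elim ⊥ (fun a => (a : EReal))

/-- The `(i+1)`-th largest value among `f a, f (a+1), …, f (b-1)` (as an extended real,
`⊥` if the block has at most `i` elements). -/
noncomputable def blockStat (f : ℕ → ℝ) (a b : ℕ) (i : ℕ) : EReal :=
  kthLargest ((List.range (b - a)).map (fun j => f (a + j))) i

/-!
Cut the sample `X_1, …, X_n` along the regeneration times. If the cycles `1, …, m` fit into
`[1, n]`, then `M_n ≤ x` forces `ζ_1, …, ζ_m ≤ x`; conversely, if they cover `[1, n]`, then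
`ζ_1, …, ζ_m ≤ x` forces `M_n ≤ x` unless the initial cycle beats all of them, an event whose
probability vanishes by hypothesis. By independence `P(ζ_1, …, ζ_m ≤ x) = F(x)^m` with
`F(x) = P(ζ_1 ≤ x)`, and by the strong law `S_m ≈ μ m`, so taking `m` slightly below and slightly
above `n / μ` sandwiches `P(M_n ≤ x)` between powers of `F(x)` close to `F(x)^(n/μ) = G(x)^n`.
The errors do not depend on `x`, because on `[0, 1]` Bernoulli's inequality gives
`t^c - t^d ≤ d / c - 1` for `0 < c ≤ d`.
-/

open Topology

theorem kthLargest_zero_le_iff (l : List ℝ) (x : EReal) :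
    kthLargest l 0 ≤ x ↔ ∀ y ∈ l, (y : EReal) ≤ x := by
  have hperm := l.perm_insertionSort (· ≥ ·)
  have hsort := List.pairwise_insertionSort (· ≥ ·) l
  unfold kthLargest
  rcases hs : l.insertionSort (· ≥ ·) with _ | ⟨h, t⟩
  · rw [hs, List.nil_perm] at hperm
    simp [hperm]
  · rw [hs] at hperm hsort
    simp only [List.getElem?_cons_zero, Option.elim, ← hperm.mem_iff, List.forall_mem_cons]
    refine ⟨fun hx => ⟨hx, fun y hy => le_trans ?_ hx⟩, fun h => h.1⟩
    exact_mod_cast (List.pairwise_cons.1 hsort).1 y hy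

theorem blockStat_zero_le_iff (f : ℕ → ℝ) (a b : ℕ) (x : EReal) :
    blockStat f a b 0 ≤ x ↔ ∀ j, a ≤ j → j < b → (f j : EReal) ≤ x := by
  simp only [blockStat, kthLargest_zero_le_iff, List.forall_mem_map, List.mem_range]
  refine ⟨fun h j haj hjb => ?_, fun h i hi => h _ (by omega) (by omega)⟩
  simpa [Nat.add_sub_cancel' haj] using h (j - a) (by omega)

theorem blockStat_zero_mono (f : ℕ → ℝ) {a a' b b' : ℕ} (ha : a' ≤ a) (hb : b ≤ b') :
    blockStat f a b 0 ≤ blockStat f a' b' 0 := by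
  rw [blockStat_zero_le_iff]
  intro j haj hjb
  exact (blockStat_zero_le_iff f a' b' _).1 le_rfl j (by omega) (by omega)

theorem succ_eq_add_of_sub_eq {s y : ℕ → ℕ} (hs : Monotone s)
    (hy : ∀ n, y n = s n - (if n = 0 then 0 else s (n - 1))) (m : ℕ) :
    s (m + 1) = s m + y (m + 1) := by
  have : s m ≤ s (m + 1) := hs m.le_succ
  rw [hy, if_neg m.succ_ne_zero, Nat.add_sub_cancel]
  omega

noncomputable def cycleMax (f : ℕ → ℝ) (s : ℕ → ℕ) (k : ℕ) : EReal :=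
  blockStat f (if k = 0 then 0 else s (k - 1)) (s k) 0

theorem cycleMax_le_blockStat (f : ℕ → ℝ) {s : ℕ → ℕ} (hs : Monotone s) {a b k m : ℕ}
    (ha : a ≤ s 0) (hb : s m ≤ b) (hk : 1 ≤ k) (hkm : k ≤ m) :
    cycleMax f s k ≤ blockStat f a b 0 := by
  rw [cycleMax, if_neg (by omega)]
  exact blockStat_zero_mono f (ha.trans (hs (Nat.zero_le _))) ((hs hkm).trans hb)

theorem blockStat_le_of_forall_cycleMax_le (f : ℕ → ℝ) {s : ℕ → ℕ}
    {a b m : ℕ} {x : EReal} (hb : b ≤ s m) (h : ∀ k ≤ m, cycleMax f s k ≤ x) :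
    blockStat f a b 0 ≤ x := by
  rw [blockStat_zero_le_iff]
  intro j _ hjb
  -- `j` lies in the first cycle that ends after it
  have hex : ∃ k, j < s k := ⟨m, by omega⟩
  have hk := h (Nat.find hex) (Nat.find_le (by omega))
  rw [cycleMax, blockStat_zero_le_iff] at hk
  refine hk j ?_ (Nat.find_spec hex)
  split_ifs with h0
  · exact Nat.zero_le _
  · exact not_lt.1 (Nat.find_min hex (by omega))

theorem rpow_sub_rpow_le_div_sub_one {t c d : ℝ} (ht0 : 0 ≤ t) (ht1 : t ≤ 1) (hc : 0 < c)
    (hcd : c ≤ d) : t ^ c - t ^ d ≤ d / c - 1 := by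
  set s := t ^ c
  have hs0 : 0 ≤ s := Real.rpow_nonneg ht0 c
  have hs1 : s ≤ 1 := Real.rpow_le_one ht0 ht1 hc.le
  have hp : 1 ≤ d / c := (one_le_div hc).2 hcd
  have hd : t ^ d = s ^ (d / c) := by
    rw [← Real.rpow_mul ht0, mul_div_cancel₀ _ hc.ne']
  have bernoulli := one_add_mul_self_le_rpow_one_add (s := s - 1) (by linarith) hp
  rw [add_sub_cancel] at bernoulli
  rw [hd]
  nlinarith

theorem tendsto_zero_of_forall_eventually_le {ι : Type*} {l : Filter ι} {f : ι → ℝ}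
    (h0 : ∀ i, 0 ≤ f i)
    (h : ∀ ε > 0, ∃ b : ι → ℝ, Tendsto b l (𝓝 ε) ∧ ∀ᶠ i in l, f i ≤ b i) :
    Tendsto f l (𝓝 0) := by
  refine tendsto_order.2 ⟨fun a ha => .of_forall fun i => ha.trans_le (h0 i), fun δ hδ => ?_⟩
  obtain ⟨b, hb, hfb⟩ := h (δ / 2) (half_pos hδ)
  filter_upwards [hfb, hb.eventually_lt_const (half_lt_self hδ)] with i h1 h2
  exact h1.trans_lt h2

theorem abs_sub_rpow_le_max {t u a qU qL : ℝ} {m m' : ℕ} (hu0 : 0 ≤ u) (hu1 : u ≤ 1)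
    (hm : 0 < m) (hma : m ≤ a) (ham' : a ≤ m') (hU : t ≤ u ^ m + qU) (hL : u ^ m' - qL ≤ t) :
    |t - u ^ a| ≤ max (a / m - 1 + qU) (m' / a - 1 + qL) := by
  have hm0 : (0 : ℝ) < m := Nat.cast_pos.2 hm
  have gapU := rpow_sub_rpow_le_div_sub_one hu0 hu1 hm0 hma
  have gapL := rpow_sub_rpow_le_div_sub_one hu0 hu1 (hm0.trans_le hma) ham'
  rw [Real.rpow_natCast] at gapU gapL
  rw [abs_le]
  constructor <;> linarith [le_max_left (a / m - 1 + qU) (m' / a - 1 + qL),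
    le_max_right (a / m - 1 + qU) (m' / a - 1 + qL)]

theorem tendsto_iSup_abs_sub_rpow_of_sandwich {ι : Type*} {l : Filter ι} {T : ι → ℝ → ℝ}
    {F : ℝ → ℝ} (hF0 : ∀ x, 0 ≤ F x) (hF1 : ∀ x, F x ≤ 1) {a : ι → ℝ}
    (ha : Tendsto a l atTop) {qU qL : ι → ℕ → ℝ}
    (hU : ∀ i m x, T i x ≤ F x ^ m + qU i m) (hL : ∀ i m x, F x ^ m - qL i m ≤ T i x)
    (hqU : ∀ c > 1, Tendsto (fun i => qU i ⌊c⁻¹ * a i⌋₊) l (𝓝 0))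
    (hqL : ∀ c > 1, Tendsto (fun i => qL i ⌈c * a i⌉₊) l (𝓝 0)) :
    Tendsto (fun i => ⨆ x, |T i x - F x ^ a i|) l (𝓝 0) := by
  refine tendsto_zero_of_forall_eventually_le (fun i => Real.iSup_nonneg fun x => abs_nonneg _) ?_
  intro ε hε
  set c := 1 + ε
  have hc : 1 < c := by linarith
  set m := fun i => ⌊c⁻¹ * a i⌋₊
  set m' := fun i => ⌈c * a i⌉₊
  -- with `m ≈ a / c` and `m' ≈ c a` the bound of `abs_sub_rpow_le_max` tends to `c - 1 = ε`
  refine ⟨fun i => max (a i / m i - 1 + qU i (m i)) (m' i / a i - 1 + qL i (m' i)), ?_, ?_⟩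
  · have hm : Tendsto (fun i => a i / m i) l (𝓝 c) := by
      have := ((tendsto_nat_floor_mul_div_atTop (a := c⁻¹) (by positivity)).comp ha).inv₀
        (by positivity)
      simpa only [Function.comp_def, inv_inv, inv_div] using this
    have hm' : Tendsto (fun i => m' i / a i) l (𝓝 c) :=
      (tendsto_nat_ceil_mul_div_atTop (a := c) (by positivity)).comp ha
    have := ((hm.sub_const 1).add (hqU c hc)).max ((hm'.sub_const 1).add (hqL c hc))
    simpa [c] using this
  · have hmTop : Tendsto m l atTop :=
      tendsto_nat_floor_atTop.comp (ha.const_mul_atTop (inv_pos.2 (by positivity)))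
    filter_upwards [ha.eventually_ge_atTop 0, hmTop.eventually_gt_atTop 0] with i ha0 hm0
    refine ciSup_le fun x => abs_sub_rpow_le_max (hF0 x) (hF1 x) hm0 ?_ ?_ (hU i _ x) (hL i _ x)
    · exact (Nat.floor_le (by positivity)).trans
        (mul_le_of_le_one_left ha0 (inv_le_one_of_one_le₀ hc.le))
    · exact (le_mul_of_one_le_left ha0 hc.le).trans (Nat.le_ceil _)

section Probability

variable {Ω : Type*} [MeasurableSpace Ω] {P : Measure Ω}

theorem measureReal_forall_Icc_mem_eq_pow {β : Type*} [MeasurableSpace β] {Z : ℕ → Ω → β}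
    (hind : iIndepFun Z P) (hid : ∀ n, 1 ≤ n → IdentDistrib (Z n) (Z 1) P P) {A : Set β}
    (hA : MeasurableSet A) (m : ℕ) :
    P.real {ω | ∀ k, 1 ≤ k → k ≤ m → Z k ω ∈ A} = P.real (Z 1 ⁻¹' A) ^ m := by
  have hset : {ω | ∀ k, 1 ≤ k → k ≤ m → Z k ω ∈ A} = ⋂ k ∈ Finset.Icc 1 m, Z k ⁻¹' A := by
    ext ω
    simp [and_imp]
  rw [measureReal_def, measureReal_def, ← ENNReal.toReal_pow, hset,
    hind.meas_biInter fun k _ => ⟨A, hA, rfl⟩,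
    Finset.prod_congr rfl fun k hk => (hid k (Finset.mem_Icc.1 hk).1).measure_mem_eq hA,
    Finset.prod_const, Nat.card_Icc, Nat.add_sub_cancel]

theorem tendsto_measureReal_notMem_of_ae_tendsto [IsFiniteMeasure P] {E : Type*}
    [MetricSpace E] {Z : ℕ → Ω → E} {z : E} (hZ : ∀ m, AEStronglyMeasurable (Z m) P)
    (hlim : ∀ᵐ ω ∂P, Tendsto (fun m => Z m ω) atTop (𝓝 z)) {U : Set E} (hU : U ∈ 𝓝 z) :
    Tendsto (fun m => P.real {ω | Z m ω ∉ U}) atTop (𝓝 0) := by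
  obtain ⟨η, hη, hball⟩ := Metric.mem_nhds_iff.1 hU
  have hfar := tendstoInMeasure_iff_dist.1 (tendstoInMeasure_of_tendsto_ae hZ hlim) η hη
  refine squeeze_zero (fun _ => measureReal_nonneg) (fun m => measureReal_mono fun ω hω => ?_)
    ((ENNReal.tendsto_toReal ENNReal.zero_ne_top).comp hfar)
  exact not_lt.1 fun h => hω (hball (Metric.mem_ball.2 h))

theorem ae_tendsto_div_of_increments {S Y : ℕ → Ω → ℕ}
    (hSY : ∀ m ω, S (m + 1) ω = S m ω + Y (m + 1) ω)
    (hindep : Pairwise fun i j => IndepFun (Y i) (Y j) P)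
    (hid : ∀ n, 1 ≤ n → IdentDistrib (Y n) (Y 1) P P)
    (hint : Integrable (fun ω => (Y 1 ω : ℝ)) P) :
    ∀ᵐ ω ∂P, Tendsto (fun m => (S m ω : ℝ) / m) atTop (𝓝 (∫ ω, (Y 1 ω : ℝ) ∂P)) := by
  have hsum : ∀ m ω, (S m ω : ℝ) = S 0 ω + ∑ i ∈ Finset.range m, (Y (i + 1) ω : ℝ) := by
    intro m ω
    induction m with
    | zero => simp
    | succ m ih => rw [Finset.sum_range_succ, hSY, Nat.cast_add, ih, add_assoc]
  have hslln := strong_law_ae_real (fun i ω => (Y (i + 1) ω : ℝ)) hint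
    (fun i j hij => (hindep (by omega)).comp measurable_from_top measurable_from_top)
    (fun i => ((hid (i + 1) (by omega)).trans (hid 1 le_rfl).symm).comp measurable_from_top)
  filter_upwards [hslln] with ω hω
  have := (tendsto_const_div_atTop_nhds_zero_nat (S 0 ω : ℝ)).add hω
  rw [zero_add] at this
  refine this.congr fun m => ?_
  rw [hsum m ω, add_div]

theorem tendsto_measureReal_lt_floor [IsFiniteMeasure P] {S : ℕ → Ω → ℕ}
    (hS : ∀ m, Measurable (S m)) {μ : ℝ} (hμ : 0 < μ)
    (hlim : ∀ᵐ ω ∂P, Tendsto (fun m => (S m ω : ℝ) / m) atTop (𝓝 μ)) {c : ℝ} (hc : 1 < c) :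
    Tendsto (fun n : ℕ => P.real {ω | n < S ⌊c⁻¹ * (n / μ)⌋₊ ω}) atTop (𝓝 0) := by
  set m := fun n : ℕ => ⌊c⁻¹ * (n / μ)⌋₊
  have hm : Tendsto m atTop atTop := tendsto_nat_floor_atTop.comp
    ((tendsto_natCast_atTop_atTop.atTop_div_const hμ).const_mul_atTop (by positivity))
  have hbad := (tendsto_measureReal_notMem_of_ae_tendsto
    (fun k => ((measurable_from_top.comp (hS k)).div_const _).aestronglyMeasurable) hlim
    (Iio_mem_nhds (lt_mul_of_one_lt_left hμ hc))).comp hm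
  refine squeeze_zero' (.of_forall fun _ => measureReal_nonneg) ?_ hbad
  filter_upwards [hm.eventually_gt_atTop 0] with n hn
  refine measureReal_mono fun ω hω => ?_
  have hmn : c * μ * m n ≤ n := calc
    c * μ * m n ≤ c * μ * (c⁻¹ * (n / μ)) := by gcongr; exact Nat.floor_le (by positivity)
    _ = n := by field_simp
  show ¬ (S (m n) ω : ℝ) / m n < c * μ
  rw [not_lt, le_div_iff₀ (by exact_mod_cast hn)]
  exact hmn.trans (by exact_mod_cast hω.le)

theorem tendsto_measureReal_le_ceil [IsFiniteMeasure P] {S : ℕ → Ω → ℕ}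
    (hS : ∀ m, Measurable (S m)) {μ : ℝ} (hμ : 0 < μ)
    (hlim : ∀ᵐ ω ∂P, Tendsto (fun m => (S m ω : ℝ) / m) atTop (𝓝 μ)) {c : ℝ} (hc : 1 < c) :
    Tendsto (fun n : ℕ => P.real {ω | S ⌈c * (n / μ)⌉₊ ω ≤ n}) atTop (𝓝 0) := by
  set m := fun n : ℕ => ⌈c * (n / μ)⌉₊
  have hm : Tendsto m atTop atTop := tendsto_nat_ceil_atTop.comp
    ((tendsto_natCast_atTop_atTop.atTop_div_const hμ).const_mul_atTop (by positivity))
  have hbad := (tendsto_measureReal_notMem_of_ae_tendsto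
    (fun k => ((measurable_from_top.comp (hS k)).div_const _).aestronglyMeasurable) hlim
    (Ioi_mem_nhds (show c⁻¹ * μ < μ by
      rw [inv_mul_lt_iff₀ (by positivity)]; nlinarith))).comp hm
  refine squeeze_zero' (.of_forall fun _ => measureReal_nonneg) ?_ hbad
  filter_upwards [hm.eventually_gt_atTop 0] with n hn
  refine measureReal_mono fun ω hω => ?_
  have hmn : (n : ℝ) ≤ c⁻¹ * μ * m n := calc
    (n : ℝ) = c⁻¹ * μ * (c * (n / μ)) := by field_simp
    _ ≤ c⁻¹ * μ * m n := by gcongr; exact Nat.le_ceil _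
  show ¬ c⁻¹ * μ < (S (m n) ω : ℝ) / m n
  rw [not_lt, div_le_iff₀ (by exact_mod_cast hn)]
  exact (by exact_mod_cast hω : (S (m n) ω : ℝ) ≤ n).trans hmn

theorem measureReal_blockStat_le_le_pow_add [IsFiniteMeasure P] {X : ℕ → Ω → ℝ}
    {S : ℕ → Ω → ℕ} {ζ : ℕ → Ω → EReal} (hS0 : ∀ ω, 0 < S 0 ω)
    (hSmono : ∀ ω, Monotone (S · ω)) (hζ : ∀ k ω, ζ k ω = cycleMax (X · ω) (S · ω) k)
    (hind : iIndepFun ζ P) (hid : ∀ n, 1 ≤ n → IdentDistrib (ζ n) (ζ 1) P P)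
    (n m : ℕ) (x : EReal) :
    P.real {ω | blockStat (X · ω) 1 (n + 1) 0 ≤ x} ≤
      P.real {ω | ζ 1 ω ≤ x} ^ m + P.real {ω | n < S m ω} := by
  have hprod : P.real {ω | ∀ k, 1 ≤ k → k ≤ m → ζ k ω ≤ x} = P.real {ω | ζ 1 ω ≤ x} ^ m :=
    measureReal_forall_Icc_mem_eq_pow hind hid measurableSet_Iic m
  rw [← hprod]
  refine (measureReal_mono fun ω hω => ?_).trans (measureReal_union_le _ _)
  by_cases hSm : S m ω ≤ n
  · refine Or.inl fun k hk hkm => ?_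
    rw [hζ]
    exact (cycleMax_le_blockStat _ (hSmono ω) (hS0 ω) (by omega) hk hkm).trans hω
  · exact Or.inr (not_le.1 hSm)

theorem pow_sub_le_measureReal_blockStat_le [IsFiniteMeasure P] {X : ℕ → Ω → ℝ}
    {S : ℕ → Ω → ℕ} {ζ : ℕ → Ω → EReal} (hζ : ∀ k ω, ζ k ω = cycleMax (X · ω) (S · ω) k)
    (hind : iIndepFun ζ P) (hid : ∀ n, 1 ≤ n → IdentDistrib (ζ n) (ζ 1) P P)
    (n m : ℕ) (x : EReal) :
    P.real {ω | ζ 1 ω ≤ x} ^ m -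
        (P.real {ω | ∀ k, 1 ≤ k → k ≤ m → ζ k ω < ζ 0 ω} + P.real {ω | S m ω ≤ n}) ≤
      P.real {ω | blockStat (X · ω) 1 (n + 1) 0 ≤ x} := by
  have hprod : P.real {ω | ∀ k, 1 ≤ k → k ≤ m → ζ k ω ≤ x} = P.real {ω | ζ 1 ω ≤ x} ^ m :=
    measureReal_forall_Icc_mem_eq_pow hind hid measurableSet_Iic m
  rw [← hprod, sub_le_iff_le_add, ← add_assoc]
  refine (measureReal_mono fun ω hω => ?_).trans ((measureReal_union_le _ _).trans
    (add_le_add_left (measureReal_union_le _ _) _))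
  by_cases hSm : S m ω ≤ n
  · exact Or.inr hSm
  by_cases h0 : ζ 0 ω ≤ x
  · refine Or.inl (Or.inl (blockStat_le_of_forall_cycleMax_le _ (s := (S · ω)) (m := m)
      (by omega) ?_))
    rintro (_ | k) hk
    · rwa [← hζ]
    · rw [← hζ]
      exact hω _ (by omega) hk
  · exact Or.inl (Or.inr fun k hk hkm => (hω k hk hkm).trans_lt (not_le.1 h0))

end Probability

theorem regenerative_phantom_distribution_general
    {Ω : Type*} [MeasurableSpace Ω] (P : Measure Ω) [IsProbabilityMeasure P]
    (X : ℕ → Ω → ℝ) (S : ℕ → Ω → ℕ)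
    (hSmeas : ∀ n, Measurable (S n))
    (hS0 : ∀ ω, 0 < S 0 ω)
    (hSmono : ∀ ω, StrictMono (fun n => S n ω))
    (Y : ℕ → Ω → ℕ)
    (hY : ∀ n ω, Y n ω = S n ω - (if n = 0 then 0 else S (n - 1) ω))
    (ζ : ℕ → Ω → EReal)
    (hζ : ∀ n ω,
      ζ n ω = blockStat (fun k => X k ω) (if n = 0 then 0 else S (n - 1) ω) (S n ω) 0)
    (hYindep : iIndepFun Y P)
    (hYid : ∀ n, 1 ≤ n → IdentDistrib (Y n) (Y 1) P P)
    (hζindep : iIndepFun ζ P)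
    (hζid : ∀ n, 1 ≤ n → IdentDistrib (ζ n) (ζ 1) P P)
    (hYint : Integrable (fun ω => (Y 1 ω : ℝ)) P)
    (μ : ℝ) (hμ : μ = ∫ ω, (Y 1 ω : ℝ) ∂P)
    (hC0 : Tendsto (fun n : ℕ => P {ω | ∀ k, 1 ≤ k → k ≤ n → ζ k ω < ζ 0 ω})
      atTop (nhds 0))
    (G : ℝ → ℝ) (hG : ∀ x : ℝ, G x = (P {ω | ζ 1 ω ≤ (x : EReal)}).toReal ^ (1 / μ)) :
    Tendsto
      (fun n : ℕ =>
        ⨆ x : ℝ,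
          |(P {ω | blockStat (fun k => X k ω) 1 (n + 1) 0 ≤ (x : EReal)}).toReal -
            G x ^ n|)
      atTop (nhds 0) := by
  have hSY (m : ℕ) (ω : Ω) : S (m + 1) ω = S m ω + Y (m + 1) ω :=
    succ_eq_add_of_sub_eq (hSmono ω).monotone (hY · ω) m
  have hμpos : 0 < μ := by
    obtain ⟨ω, hω⟩ := exists_le_integral hYint
    have : S 1 ω = S 0 ω + Y 1 ω := hSY 0 ω
    have : S 0 ω < S 1 ω := hSmono ω zero_lt_one
    have : (0 : ℝ) < Y 1 ω := by exact_mod_cast (by omega : 0 < Y 1 ω)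
    linarith
  have hlim : ∀ᵐ ω ∂P, Tendsto (fun m => (S m ω : ℝ) / m) atTop (𝓝 μ) :=
    hμ ▸ ae_tendsto_div_of_increments hSY (fun i j hij => hYindep.indepFun hij) hYid hYint
  have hC : Tendsto (fun m => P.real {ω | ∀ k, 1 ≤ k → k ≤ m → ζ k ω < ζ 0 ω}) atTop (𝓝 0) :=
    (ENNReal.tendsto_toReal ENNReal.zero_ne_top).comp hC0
  have ha : Tendsto (fun n : ℕ => n / μ) atTop atTop :=
    tendsto_natCast_atTop_atTop.atTop_div_const hμpos
  have hsandwich := tendsto_iSup_abs_sub_rpow_of_sandwich (l := atTop)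
    (T := fun n x => P.real {ω | blockStat (X · ω) 1 (n + 1) 0 ≤ (x : EReal)})
    (qU := fun n m => P.real {ω | n < S m ω})
    (qL := fun n m => P.real {ω | ∀ k, 1 ≤ k → k ≤ m → ζ k ω < ζ 0 ω} + P.real {ω | S m ω ≤ n})
    (fun _ => measureReal_nonneg) (fun _ => measureReal_le_one) ha
    (fun n m x => measureReal_blockStat_le_le_pow_add hS0 (fun ω => (hSmono ω).monotone) hζ
      hζindep hζid n m x)
    (fun n m x => pow_sub_le_measureReal_blockStat_le hζ hζindep hζid n m x)
    (fun c hc => tendsto_measureReal_lt_floor hSmeas hμpos hlim hc)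
    (fun c hc => by
      have := (hC.comp (tendsto_nat_ceil_atTop.comp (ha.const_mul_atTop (by linarith)))).add
        (tendsto_measureReal_le_ceil hSmeas hμpos hlim hc)
      rwa [add_zero] at this)
  refine hsandwich.congr fun n => ?_
  congr 1 with x
  rw [hG, ← Real.rpow_natCast, ← Real.rpow_mul ENNReal.toReal_nonneg, one_div_mul_eq_div]
  rfl

/-- **Rootzén.** Let `{X_n}` have a 1-max-regenerative structure, with
regeneration times `0 < S 0 < S 1 < ⋯` (and `S_{-1} := 0`), cycle lengths
`Y n = S n - S (n-1)` independent and identically distributed for `n ≥ 1`, and cycle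
maxima `ζ n` (the largest value of `X` on `[S (n-1), S n)`) independent and identically
distributed for `n ≥ 1`.  Assume `μ = E[Y 1] < ∞` and
`P(ζ 0 > max_{1 ≤ k ≤ n} ζ k) → 0`.  With `G(x) = P(ζ 1 ≤ x)^{1/μ}`,
`sup_x |P(M_n ≤ x) - G(x)^n| → 0` as `n → ∞`, where `M_n = max {X_k : 1 ≤ k ≤ n}`. -/
theorem regenerative_phantom_distribution
    {Ω : Type*} [MeasurableSpace Ω] (P : Measure Ω) [IsProbabilityMeasure P]
    (X : ℕ → Ω → ℝ) (S : ℕ → Ω → ℕ)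
    (hXmeas : ∀ n, Measurable (X n)) (hSmeas : ∀ n, Measurable (S n))
    (hS0 : ∀ ω, 0 < S 0 ω)
    (hSmono : ∀ ω, StrictMono (fun n => S n ω))
    (Y : ℕ → Ω → ℕ)
    (hY : ∀ n ω, Y n ω = S n ω - (if n = 0 then 0 else S (n - 1) ω))
    (ζ : ℕ → Ω → EReal)
    (hζ : ∀ n ω,
      ζ n ω = blockStat (fun k => X k ω) (if n = 0 then 0 else S (n - 1) ω) (S n ω) 0)
    (hYindep : iIndepFun Y P)
    (hYid : ∀ n, 1 ≤ n → IdentDistrib (Y n) (Y 1) P P)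
    (hζindep : iIndepFun ζ P)
    (hζid : ∀ n, 1 ≤ n → IdentDistrib (ζ n) (ζ 1) P P)
    (hYint : Integrable (fun ω => (Y 1 ω : ℝ)) P)
    (μ : ℝ) (hμ : μ = ∫ ω, (Y 1 ω : ℝ) ∂P)
    (hC0 : Tendsto (fun n : ℕ => P {ω | ∀ k, 1 ≤ k → k ≤ n → ζ k ω < ζ 0 ω})
      atTop (nhds 0))
    (G : ℝ → ℝ) (hG : ∀ x : ℝ, G x = (P {ω | ζ 1 ω ≤ (x : EReal)}).toReal ^ (1 / μ)) :
    Tendsto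
      (fun n : ℕ =>
        ⨆ x : ℝ,
          |(P {ω | blockStat (fun k => X k ω) 1 (n + 1) 0 ≤ (x : EReal)}).toReal -
            G x ^ n|)
      atTop (nhds 0) :=
  regenerative_phantom_distribution_general P X S hSmeas hS0 hSmono Y hY ζ hζ hYindep hYid hζindep
    hζid hYint μ hμ hC0 G hG
end

section
/- Let ζ_0, ζ_1, ζ_2, … be independent real-valued random variables such that ζ_1, ζ_2, … are identically distributed. Define x_*^{ζ_0} := sup{x ∈ ℝ : P(ζ_0 ≤ x) < 1} and x_*^{ζ_1} := sup{x ∈ ℝ : P(ζ_1 ≤ x) < 1}. Then P(ζ_0 > max_{1≤k≤n} ζ_k) → 0 as n → ∞ if and only if both of the following hold: (i) x_*^{ζ_0} ≤ x_*^{ζ_1}, and (ii) if P(ζ_0 = x_*^{ζ_1}) > 0 then P(ζ_1 = x_*^{ζ_1}) > 0 (here condition (ii) is only relevant when x_*^{ζ_1} < ∞). -/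
/-!
Write `R` for the right endpoint of the law of `ζ₁`. Almost surely every `ζₖ` (`k ≥ 1`) is at
most `R`, and by the second Borel–Cantelli lemma the `ζₖ` exceed every level below `R`. If `ζ₁`
has an atom at `R`, some `ζₖ` hits `R` almost surely, so `{ζ₀ > ζₖ for all k}` is a.s.
`{ζ₀ > R}`; otherwise all `ζₖ < R` a.s. and that event is a.s. `{ζ₀ ≥ R}`. Its probability is
the limit of `P(ζ₀ > max_{k ≤ n} ζₖ)`, and `P(ζ₀ > R) = 0` exactly when the right endpoint of
`ζ₀` is at most `R`.
-/

open MeasureTheory ProbabilityTheory Filter Topology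

theorem MeasureTheory.tendsto_measure_nhds_zero_iff_of_antitone {α ι : Type*}
    [MeasurableSpace α] {μ : Measure α} [IsFiniteMeasure μ] [SemilatticeSup ι] [Nonempty ι]
    [IsCountablyGenerated (atTop : Filter ι)] {s : ι → Set α}
    (hs : ∀ i, NullMeasurableSet (s i) μ) (hanti : Antitone s) :
    Tendsto (fun i => μ (s i)) atTop (𝓝 0) ↔ μ (⋂ i, s i) = 0 :=
  have hlim := tendsto_measure_iInter_atTop hs hanti ⟨Classical.arbitrary ι, measure_ne_top μ _⟩
  ⟨fun h => tendsto_nhds_unique hlim h, fun h => h ▸ hlim⟩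

theorem ProbabilityTheory.iIndepFun.iIndepSet_preimage {Ω ι β : Type*} [MeasurableSpace Ω]
    [MeasurableSpace β] {P : Measure Ω} {X : ι → Ω → β} (h : iIndepFun X P)
    (hX : ∀ i, Measurable (X i)) {S : Set β} (hS : MeasurableSet S) :
    iIndepSet (fun i => X i ⁻¹' S) P :=
  (iIndepSet_iff_meas_biInter fun i => hX i hS).2 fun s =>
    h.measure_inter_preimage_eq_mul s fun _ _ => hS

namespace ProbabilityTheory

variable {Ω : Type*} [MeasurableSpace Ω] {P : Measure Ω}

theorem ae_frequently_mem_of_iIndepFun_of_identDistrib {β : Type*} [MeasurableSpace β]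
    [IsProbabilityMeasure P] {X : ℕ → Ω → β} (hX : ∀ n, Measurable (X n))
    (hindep : iIndepFun X P) (hid : ∀ n, IdentDistrib (X n) (X 0) P P) {S : Set β}
    (hS : MeasurableSet S) (hpos : P (X 0 ⁻¹' S) ≠ 0) :
    ∀ᵐ ω ∂P, ∃ᶠ n in atTop, X n ω ∈ S := by
  have hlimsup : P (limsup (fun n => X n ⁻¹' S) atTop) = 1 := by
    refine measure_limsup_eq_one (fun n => hX n hS) (hindep.iIndepSet_preimage hX hS) ?_
    simp_rw [fun n => (hid n).measure_mem_eq hS]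
    exact ENNReal.tsum_const_eq_top_of_ne_zero hpos
  have hmeas := MeasurableSet.measurableSet_limsup fun n => hX n hS
  filter_upwards [(ae_iff_measure_eq hmeas.nullMeasurableSet).2
    (hlimsup.trans measure_univ.symm)] with ω hω
  exact mem_limsup_iff_frequently_mem.mp hω

/-- The paper's `x_*^X`, valued in `EReal` so that it is `⊤` when `X` is not a.s. bounded above. -/
noncomputable def rightEndpoint (P : Measure Ω) (X : Ω → ℝ) : EReal :=
  sSup {y : EReal | ∃ x : ℝ, y = x ∧ P {ω | X ω ≤ x} < 1}

section RightEndpoint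

variable {X : Ω → ℝ}

theorem le_rightEndpoint {x : ℝ} (h : P {ω | X ω ≤ x} < 1) : (x : EReal) ≤ rightEndpoint P X :=
  le_sSup ⟨x, rfl, h⟩

theorem measure_le_lt_one_of_lt_rightEndpoint {x : ℝ} (h : (x : EReal) < rightEndpoint P X) :
    P {ω | X ω ≤ x} < 1 := by
  obtain ⟨_, ⟨y, rfl, hy⟩, hxy⟩ := lt_sSup_iff.mp h
  exact (measure_mono fun ω (hω : X ω ≤ x) => hω.trans (EReal.coe_le_coe_iff.mp hxy.le)).trans_lt hy

variable [IsProbabilityMeasure P]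

theorem ae_le_rightEndpoint (hX : Measurable X) : ∀ᵐ ω ∂P, (X ω : EReal) ≤ rightEndpoint P X := by
  have hle_rat : ∀ q : ℚ, ∀ᵐ ω ∂P, rightEndpoint P X < (q : ℝ) → X ω ≤ q := fun q =>
    eventually_imp_distrib_left.2 fun hq => by
      have hone : P {ω | X ω ≤ q} = 1 := by
        by_contra hne
        exact hq.not_ge (le_rightEndpoint (prob_le_one.lt_of_ne hne))
      exact (ae_iff_measure_eq (hX measurableSet_Iic).nullMeasurableSet).2
        (hone.trans measure_univ.symm)
  filter_upwards [ae_all_iff.2 hle_rat] with ω hω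
  refine EReal.le_of_forall_lt_iff_le.mp fun z hz => ?_
  obtain ⟨q, hRq, hqz⟩ := EReal.lt_iff_exists_rat_btwn.mp hz
  exact (EReal.coe_le_coe_iff.mpr (hω q hRq)).trans hqz.le

theorem rightEndpoint_le_iff (hX : Measurable X) {x : EReal} :
    rightEndpoint P X ≤ x ↔ P {ω | x < X ω} = 0 := by
  constructor
  · intro hRx
    refine measure_mono_null (fun ω (hω : x < X ω) => ?_) (ae_iff.mp (ae_le_rightEndpoint hX))
    exact (hRx.trans_lt hω).not_ge
  · intro h
    by_contra! hlt
    obtain ⟨y, hxy, hyR⟩ := EReal.lt_iff_exists_real_btwn.mp hlt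
    have hcompl : {ω | y < X ω} = {ω | X ω ≤ y}ᶜ := by ext; simp
    have hpos : P {ω | y < X ω} ≠ 0 := by
      rw [hcompl, prob_compl_eq_one_sub (measurableSet_le hX measurable_const)]
      exact (tsub_pos_iff_lt.mpr (measure_le_lt_one_of_lt_rightEndpoint hyR)).ne'
    refine hpos (measure_mono_null (fun ω (hω : y < X ω) => ?_) h)
    exact hxy.trans (EReal.coe_lt_coe_iff.mpr hω)

end RightEndpoint

section IIDSequence

theorem ae_forall_of_identDistrib {β : Type*} [MeasurableSpace β] {ζ : ℕ → Ω → β}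
    (hid : ∀ n, 1 ≤ n → IdentDistrib (ζ n) (ζ 1) P P) {p : β → Prop}
    (hp : MeasurableSet {x | p x}) (h : ∀ᵐ ω ∂P, p (ζ 1 ω)) :
    ∀ᵐ ω ∂P, ∀ k, 1 ≤ k → p (ζ k ω) :=
  ae_all_iff.2 fun k => eventually_imp_distrib_left.2 fun hk => (hid k hk).symm.ae_snd hp h

variable [IsProbabilityMeasure P]

theorem ae_exists_mem_of_iIndepFun {β : Type*} [MeasurableSpace β] {ζ : ℕ → Ω → β}
    (hmeas : ∀ n, Measurable (ζ n)) (hindep : iIndepFun ζ P)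
    (hid : ∀ n, 1 ≤ n → IdentDistrib (ζ n) (ζ 1) P P) {S : Set β} (hS : MeasurableSet S)
    (hpos : P (ζ 1 ⁻¹' S) ≠ 0) :
    ∀ᵐ ω ∂P, ∃ k, 1 ≤ k ∧ ζ k ω ∈ S := by
  filter_upwards [ae_frequently_mem_of_iIndepFun_of_identDistrib (X := fun n => ζ (n + 1))
    (fun n => hmeas _) (hindep.precomp (add_left_injective 1)) (fun n => hid (n + 1) (by omega))
    hS hpos] with ω hω
  obtain ⟨n, hn⟩ := hω.exists
  exact ⟨n + 1, by omega, hn⟩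

variable {ζ : ℕ → Ω → ℝ} (hmeas : ∀ n, Measurable (ζ n)) (hindep : iIndepFun ζ P)
  (hid : ∀ n, 1 ≤ n → IdentDistrib (ζ n) (ζ 1) P P)
include hmeas hindep hid

theorem ae_exists_gt_of_lt_rightEndpoint :
    ∀ᵐ ω ∂P, ∀ q : ℚ, ((q : ℝ) : EReal) < rightEndpoint P (ζ 1) → ∃ k, 1 ≤ k ∧ (q : ℝ) < ζ k ω :=
  ae_all_iff.2 fun q => eventually_imp_distrib_left.2 fun hq =>
    ae_exists_mem_of_iIndepFun hmeas hindep hid (S := Set.Ioi (q : ℝ)) measurableSet_Ioi <| by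
      have hpos := (rightEndpoint_le_iff (hmeas 1)).not.mp hq.not_ge
      simp only [EReal.coe_lt_coe_iff] at hpos
      exact hpos

theorem exceedance_ae_eq_of_atom
    (hatom : P {ω | (ζ 1 ω : EReal) = rightEndpoint P (ζ 1)} ≠ 0) :
    {ω | ∀ k, 1 ≤ k → ζ k ω < ζ 0 ω} =ᵐ[P] {ω | rightEndpoint P (ζ 1) < ζ 0 ω} := by
  have hle := ae_forall_of_identDistrib hid
    (measurableSet_le measurable_coe_real_ereal measurable_const) (ae_le_rightEndpoint (hmeas 1))
  have hhit := ae_exists_mem_of_iIndepFun hmeas hindep hid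
    (measurable_coe_real_ereal (measurableSet_singleton (rightEndpoint P (ζ 1)))) hatom
  refine eventuallyEq_set.2 ?_
  filter_upwards [hle, hhit] with ω hle ⟨k, hk, hkR⟩
  refine ⟨fun h => ?_, fun h j hj => EReal.coe_lt_coe_iff.mp ((hle j hj).trans_lt h)⟩
  exact hkR ▸ EReal.coe_lt_coe_iff.mpr (h k hk)

theorem exceedance_ae_eq_of_no_atom
    (hatom : P {ω | (ζ 1 ω : EReal) = rightEndpoint P (ζ 1)} = 0) :
    {ω | ∀ k, 1 ≤ k → ζ k ω < ζ 0 ω} =ᵐ[P] {ω | rightEndpoint P (ζ 1) ≤ ζ 0 ω} := by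
  have hlt₁ : ∀ᵐ ω ∂P, (ζ 1 ω : EReal) < rightEndpoint P (ζ 1) := by
    filter_upwards [ae_le_rightEndpoint (hmeas 1), measure_eq_zero_iff_ae_notMem.mp hatom]
      with ω hle hne using hle.lt_of_ne hne
  have hlt := ae_forall_of_identDistrib hid
    (measurableSet_lt measurable_coe_real_ereal measurable_const) hlt₁
  refine eventuallyEq_set.2 ?_
  filter_upwards [hlt, ae_exists_gt_of_lt_rightEndpoint hmeas hindep hid] with ω hlt hgt
  refine ⟨fun h => ?_, fun h j hj => EReal.coe_lt_coe_iff.mp ((hlt j hj).trans_le h)⟩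
  by_contra! h0
  obtain ⟨q, h0q, hqR⟩ := EReal.lt_iff_exists_rat_btwn.mp h0
  obtain ⟨k, hk, hqk⟩ := hgt q hqR
  exact (h k hk).not_gt (EReal.coe_lt_coe_iff.mp h0q |>.trans hqk)

end IIDSequence

end ProbabilityTheory

/-- Let `ζ₀, ζ₁, ζ₂, …` be independent real random variables with
`ζ₁, ζ₂, …` identically distributed, and let `x₀* = sup {x | P(ζ₀ ≤ x) < 1}` and
`x₁* = sup {x | P(ζ₁ ≤ x) < 1}` (right endpoints, as extended reals).  Then
`P(ζ₀ > max_{1 ≤ k ≤ n} ζ_k) → 0` iff `x₀* ≤ x₁*` and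
(`P(ζ₀ = x₁*) > 0` implies `P(ζ₁ = x₁*) > 0`). -/
theorem exceed_max_tendsto_zero_iff
    {Ω : Type*} [MeasurableSpace Ω] (P : Measure Ω) [IsProbabilityMeasure P]
    (ζ : ℕ → Ω → ℝ)
    (hmeas : ∀ n, Measurable (ζ n))
    (hindep : iIndepFun ζ P)
    (hid : ∀ n, 1 ≤ n → IdentDistrib (ζ n) (ζ 1) P P)
    (x₀ x₁ : EReal)
    (hx₀ : x₀ = sSup {y : EReal | ∃ x : ℝ, y = (x : EReal) ∧ P {ω | ζ 0 ω ≤ x} < 1})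
    (hx₁ : x₁ = sSup {y : EReal | ∃ x : ℝ, y = (x : EReal) ∧ P {ω | ζ 1 ω ≤ x} < 1}) :
    Tendsto (fun n : ℕ => P {ω | ∀ k, 1 ≤ k → k ≤ n → ζ k ω < ζ 0 ω}) atTop (nhds 0) ↔
      (x₀ ≤ x₁ ∧
        (0 < P {ω | (ζ 0 ω : EReal) = x₁} → 0 < P {ω | (ζ 1 ω : EReal) = x₁})) := by
  obtain rfl : x₀ = rightEndpoint P (ζ 0) := hx₀
  obtain rfl : x₁ = rightEndpoint P (ζ 1) := hx₁
  have hanti : Antitone fun n : ℕ => {ω | ∀ k, 1 ≤ k → k ≤ n → ζ k ω < ζ 0 ω} :=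
    fun m n hmn ω hω k h1 h2 => hω k h1 (h2.trans hmn)
  have hinter : ⋂ n : ℕ, {ω | ∀ k, 1 ≤ k → k ≤ n → ζ k ω < ζ 0 ω} =
      {ω | ∀ k, 1 ≤ k → ζ k ω < ζ 0 ω} := by
    ext ω
    simp only [Set.mem_iInter]
    exact ⟨fun h k hk => h k k hk le_rfl, fun h n k hk _ => h k hk⟩
  rw [tendsto_measure_nhds_zero_iff_of_antitone (fun n => by measurability) hanti, hinter]
  by_cases hatom : P {ω | (ζ 1 ω : EReal) = rightEndpoint P (ζ 1)} = 0
  · have hsplit : {ω | rightEndpoint P (ζ 1) ≤ ζ 0 ω} =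
        {ω | rightEndpoint P (ζ 1) < ζ 0 ω} ∪ {ω | (ζ 0 ω : EReal) = rightEndpoint P (ζ 1)} := by
      ext ω
      simp [le_iff_lt_or_eq, eq_comm]
    rw [measure_congr (exceedance_ae_eq_of_no_atom hmeas hindep hid hatom), hsplit,
      measure_union_null_iff, ← rightEndpoint_le_iff (hmeas 0)]
    simp [hatom, pos_iff_ne_zero]
  · rw [measure_congr (exceedance_ae_eq_of_atom hmeas hindep hid hatom),
      ← rightEndpoint_le_iff (hmeas 0)]
    simp [hatom, pos_iff_ne_zero]
end

section
/- Let φ : (0,∞) → [0,1] be a uniformly continuous function and define β(x) := e^x ∫_x^∞ e^{−v} φ(v) dv for x > 0, so that β(x) = e^{−ε} β(x+ε) + ∫_x^{x+ε} e^{−(v−x)} φ(v) dv for all ε > 0. If β(x) → β as x → ∞ for some β ∈ [0,1], then φ(x) → β as x → ∞. -/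
open Filter MeasureTheory Set Real Topology

/-!
Write `β(x) = e^x ∫_x^∞ e^{-v} φ(v) dv`. For every `d > 0`,
`β(x) - e^{-d} β(x + d) = ∫_x^{x+d} e^{x-v} φ(v) dv`, an average of `φ` over `[x, x + d]` against
a weight of total mass `1 - e^{-d}`. The left side tends to `(1 - e^{-d}) β`, while uniform
continuity makes the average, for `d` small, uniformly close to `(1 - e^{-d}) φ(x)`.
Dividing by `1 - e^{-d}` squeezes `φ(x)` to within any `η` of `β`.
-/

theorem tendsto_of_forall_eventually_abs_sub_le {α : Type*} {l : Filter α} {f : α → ℝ} {b : ℝ}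
    (h : ∀ η > 0, ∃ g : α → ℝ, Tendsto g l (𝓝 b) ∧ ∀ᶠ x in l, |g x - f x| ≤ η) :
    Tendsto f l (𝓝 b) := by
  refine Metric.tendsto_nhds.2 fun ε hε => ?_
  obtain ⟨g, hg, hgf⟩ := h (ε / 2) (by positivity)
  filter_upwards [Metric.tendsto_nhds.1 hg (ε / 2) (by positivity), hgf] with x hgx hfx
  rw [Real.dist_eq] at hgx ⊢
  calc |f x - b| ≤ |g x - f x| + |g x - b| := by rw [abs_sub_comm (g x)]; exact abs_sub_le _ _ _
    _ < ε := by linarith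

theorem integrableOn_exp_neg_mul_of_abs_le {φ : ℝ → ℝ} {a C : ℝ} (hφ : ContinuousOn φ (Ioi a))
    (hC : ∀ v > a, |φ v| ≤ C) : IntegrableOn (fun v => exp (-v) * φ v) (Ioi a) := by
  have hexp : IntegrableOn (fun v : ℝ => exp (-v)) (Ioi a) := by
    simpa using exp_neg_integrableOn_Ioi a one_pos
  refine hexp.mul_bdd (c := C) (hφ.aestronglyMeasurable measurableSet_Ioi) ?_
  filter_upwards [ae_restrict_mem measurableSet_Ioi] with v hv
  exact hC v hv

theorem abs_integral_mul_sub_mul_integral_le {w ψ : ℝ → ℝ} {a b c η : ℝ} (hab : a ≤ b)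
    (hw : ∀ v ∈ Ioc a b, 0 ≤ w v) (hwi : IntervalIntegrable w volume a b)
    (hwψ : IntervalIntegrable (fun v => w v * ψ v) volume a b)
    (hψ : ∀ v ∈ Ioc a b, |ψ v - c| ≤ η) :
    |(∫ v in a..b, w v * ψ v) - c * ∫ v in a..b, w v| ≤ η * ∫ v in a..b, w v := by
  rw [← intervalIntegral.integral_const_mul, ← intervalIntegral.integral_sub hwψ (hwi.const_mul c),
    ← intervalIntegral.integral_const_mul, ← Real.norm_eq_abs]
  refine intervalIntegral.norm_integral_le_of_norm_le hab (ae_of_all _ fun v hv => ?_)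
    (hwi.const_mul η)
  rw [Real.norm_eq_abs, show w v * ψ v - c * w v = w v * (ψ v - c) by ring, abs_mul,
    abs_of_nonneg (hw v hv), mul_comm η]
  exact mul_le_mul_of_nonneg_left (hψ v hv) (hw v hv)

theorem integral_exp_sub (x d : ℝ) : ∫ v in x..x + d, exp (x - v) = 1 - exp (-d) := by
  rw [intervalIntegral.integral_comp_sub_left (fun t => exp t), integral_exp]
  simp

theorem exp_mul_integral_Ioi_sub {f : ℝ → ℝ} {x d : ℝ}
    (hf : IntegrableOn (fun v => exp (-v) * f v) (Ioi x)) (hd : 0 ≤ d) :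
    exp x * (∫ v in Ioi x, exp (-v) * f v)
      - exp (-d) * (exp (x + d) * ∫ v in Ioi (x + d), exp (-v) * f v)
      = ∫ v in x..x + d, exp (x - v) * f v := by
  have hexp : exp (-d) * exp (x + d) = exp x := by rw [← exp_add]; ring_nf
  rw [← mul_assoc, hexp, ← mul_sub, intervalIntegral.integral_Ioi_sub_Ioi hf (by linarith),
    ← intervalIntegral.integral_const_mul]
  congr 1 with v
  rw [sub_eq_add_neg, exp_add]; ring

theorem abs_integral_exp_sub_mul_div_sub_le {φ : ℝ → ℝ} {x d η : ℝ} (hd : 0 < d)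
    (hφi : IntervalIntegrable φ volume x (x + d)) (hη : ∀ v ∈ Ioc x (x + d), |φ v - φ x| ≤ η) :
    |(∫ v in x..x + d, exp (x - v) * φ v) / (1 - exp (-d)) - φ x| ≤ η := by
  have hc : 0 < 1 - exp (-d) := by simpa using exp_lt_one_iff.2 (neg_lt_zero.2 hd)
  have hw : IntervalIntegrable (fun v => exp (x - v)) volume x (x + d) :=
    (continuous_const.sub continuous_id).rexp.intervalIntegrable _ _
  have key := abs_integral_mul_sub_mul_integral_le (by linarith)
    (fun v _ => (exp_pos (x - v)).le) hw (hφi.continuousOn_mul (by fun_prop)) hη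
  rw [integral_exp_sub] at key
  rw [div_sub' hc.ne', abs_div, abs_of_pos hc, div_le_iff₀ hc, mul_comm _ (φ x)]
  exact key

theorem tendsto_sub_exp_neg_mul_div {g : ℝ → ℝ} {b d : ℝ} (hg : Tendsto g atTop (𝓝 b))
    (hd : d ≠ 0) :
    Tendsto (fun x => (g x - exp (-d) * g (x + d)) / (1 - exp (-d))) atTop (𝓝 b) := by
  have hc : 1 - exp (-d) ≠ 0 := by
    rw [sub_ne_zero, ne_comm, Ne, exp_eq_one_iff, neg_eq_zero]; exact hd
  have hshift : Tendsto (fun x => g (x + d)) atTop (𝓝 b) :=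
    hg.comp (tendsto_atTop_add_const_right _ d tendsto_id)
  convert (hg.sub (hshift.const_mul (exp (-d)))).div_const (1 - exp (-d)) using 2
  field_simp

theorem phi_tendsto_of_betaInt_tendsto_general
    (φ : ℝ → ℝ) (hunif : UniformContinuousOn φ (Set.Ioi 0))
    (hφ : ∀ x, 0 < x → φ x ∈ Set.Icc (0 : ℝ) 1)
    (β : ℝ)
    (βf : ℝ → ℝ)
    (hβf : ∀ x, 0 < x →
      βf x = Real.exp x * ∫ v in Set.Ioi x, Real.exp (-v) * φ v)
    (hlim : Tendsto βf atTop (nhds β)) :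
    Tendsto φ atTop (nhds β) := by
  have hcont : ContinuousOn φ (Ioi 0) := hunif.continuousOn
  have hint : IntegrableOn (fun v => exp (-v) * φ v) (Ioi 0) :=
    integrableOn_exp_neg_mul_of_abs_le hcont fun v hv =>
      abs_le.2 ⟨by linarith [(hφ v hv).1], (hφ v hv).2⟩
  refine tendsto_of_forall_eventually_abs_sub_le fun η hη => ?_
  obtain ⟨δ, hδ, hφδ⟩ := Metric.uniformContinuousOn_iff_le.1 hunif η hη
  refine ⟨_, tendsto_sub_exp_neg_mul_div hlim hδ.ne', ?_⟩
  filter_upwards [eventually_gt_atTop 0] with x hx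
  rw [hβf x hx, hβf (x + δ) (by linarith),
    exp_mul_integral_Ioi_sub (hint.mono_set (Ioi_subset_Ioi hx.le)) hδ.le]
  refine abs_integral_exp_sub_mul_div_sub_le hδ ?_ fun v hv => ?_
  · have hle : x ≤ x + δ := by linarith
    exact (hcont.mono ((Icc_subset_Ioi_iff hle).2 hx)).intervalIntegrable_of_Icc hle
  · have hv0 : 0 < v := hx.trans hv.1
    have := hφδ v hv0 x hx (by rw [Real.dist_eq, abs_of_pos (sub_pos.2 hv.1)]; linarith [hv.2])
    rwa [Real.dist_eq] at this

/-- For uniformly continuous `φ : (0,∞) → [0,1]` and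
`β(x) := e^x ∫_x^∞ e^{-v} φ(v) dv` (so that
`β(x) = e^{-ε} β(x+ε) + ∫_x^{x+ε} e^{-(v-x)} φ(v) dv` for all `ε > 0`),
if `β(x) → β ∈ [0,1]` as `x → ∞`, then `φ(x) → β` as `x → ∞`. -/
theorem phi_tendsto_of_betaInt_tendsto
    (φ : ℝ → ℝ) (hunif : UniformContinuousOn φ (Set.Ioi 0))
    (hφ : ∀ x, 0 < x → φ x ∈ Set.Icc (0 : ℝ) 1)
    (β : ℝ) (hβ : β ∈ Set.Icc (0 : ℝ) 1)
    (βf : ℝ → ℝ)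
    (hβf : ∀ x, 0 < x →
      βf x = Real.exp x * ∫ v in Set.Ioi x, Real.exp (-v) * φ v)
    (hlim : Tendsto βf atTop (nhds β)) :
    Tendsto φ atTop (nhds β) :=
  phi_tendsto_of_betaInt_tendsto_general φ hunif hφ β βf hβf hlim
end

section
/- Let q, N ∈ ℕ_+ with q ≤ N, and let (ζ_l^{(1)}, …, ζ_l^{(q)}), l = 1, …, N, be independent and identically distributed random vectors with values in (ℝ ∪ {−∞})^q satisfying ζ_l^{(1)} ≥ ζ_l^{(2)} ≥ ⋯ ≥ ζ_l^{(q)} almost surely. Fix x ∈ ℝ and for each l let c_l := #{i ∈ {1,…,q} : ζ_l^{(i)} > x}. Then for every k ∈ {0, 1, …, q−1}: P( Σ_{l=1}^N c_l ≤ q−1 and #{l : c_l ≥ 1} = k ) = Σ_{(j_1,…,j_{q−1}) ∈ J_{q,k}} ( N! / (j_1!⋯j_{q−1}!(N−k)!) ) · P(ζ_1^{(1)} ≤ x)^{N−k} · ∏_{i=1}^{q−1} P(ζ_1^{(i+1)} ≤ x < ζ_1^{(i)})^{j_i}, where J_{q,k} := {(j_1,…,j_{q−1}) ∈ ℕ^{q−1}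 : Σ_{i=1}^{q−1} j_i = k and Σ_{i=1}^{q−1} i·j_i ≤ q−1}. -/
/-!
Write `c_l ∈ {0, …, q}` for the number of exceedances in block `l`. Since the blocks are i.i.d.
and the event only depends on `(c_1, …, c_N)`, its probability is `∑_g ∏_l P(c_1 = g_l)` over the
admissible count vectors `g`. Grouping the vectors `g` by how many blocks carry each count turns
this into a multinomial sum: `N - k` blocks have count `0` and `j_i` blocks have count `i + 1`.
Finally, because each block is nonincreasing, `c = 0` means `ζ⁽¹⁾ ≤ x`, and `c = i + 1` means
`ζ⁽ⁱ⁺²⁾ ≤ x < ζ⁽ⁱ⁺¹⁾`.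
-/

open MeasureTheory ProbabilityTheory Finset
open scoped Nat

section FiberCard

variable {α β : Type*} [Fintype α] [DecidableEq β]

def fiberCard (g : α → β) (b : β) : ℕ := #{a | g a = b}

variable [Fintype β]

theorem sum_fiberCard (g : α → β) : ∑ b, fiberCard g b = Fintype.card α :=
  (card_eq_sum_card_fiberwise fun a _ => mem_univ (g a)).symm

@[to_additive]
theorem prod_comp_eq_prod_pow_fiberCard {M : Type*} [CommMonoid M] (ρ : β → M) (g : α → β) :
    ∏ a, ρ (g a) = ∏ b, ρ b ^ fiberCard g b := by
  simp only [← prod_fiberwise' univ g ρ, prod_const, fiberCard]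

/-- Compare the coefficients of `X^n` in `(∑ b, X b) ^ card α`: expanding the product over `α`
gives one monomial `∏ a, X (g a)` per map `g`. -/
theorem card_filter_fiberCard_eq [DecidableEq α] (n : β → ℕ)
    (hn : ∑ b, n b = Fintype.card α) :
    #{g : α → β | fiberCard g = n} = Nat.multinomial univ n := by
  let d : β →₀ ℕ := Finsupp.equivFunOnFinite.symm n
  have hX : ∀ g : α → β, ∏ a, (MvPolynomial.X (g a) : MvPolynomial β ℕ) =
      MvPolynomial.monomial (Finsupp.equivFunOnFinite.symm (fiberCard g)) 1 := by
    intro g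
    rw [prod_comp_eq_prod_pow_fiberCard, ← MvPolynomial.prod_X_pow_eq_monomial]
    exact (prod_subset (subset_univ _) fun b _ hb => by simp_all).symm
  have hcoeff := MvPolynomial.coeff_sum_X_pow_of_fintype (R := ℕ) d (Fintype.card α)
  rw [← card_univ, ← prod_const, prod_univ_sum, Fintype.piFinset_univ] at hcoeff
  simp only [hX, MvPolynomial.coeff_sum, MvPolynomial.coeff_monomial] at hcoeff
  have hsum : (d.sum fun _ m => m) = #(univ : Finset α) := by
    rw [Finsupp.sum_fintype _ _ fun _ => rfl, card_univ, ← hn]; rfl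
  rw [if_pos hsum, ← Finsupp.multinomial_of_support_subset (subset_univ _), Nat.cast_id,
    ← card_filter] at hcoeff
  simpa [d, Equiv.apply_eq_iff_eq] using hcoeff

theorem sum_prod_comp_eq_sum_multinomial [DecidableEq α] {R : Type*} [CommSemiring R]
    (p : (β → ℕ) → Prop) [DecidablePred p] (ρ : β → R) :
    ∑ g : α → β with p (fiberCard g), ∏ a, ρ (g a) =
      ∑ n ∈ piAntidiag univ (Fintype.card α) with p n,
        Nat.multinomial univ n * ∏ b, ρ b ^ n b := by
  have hmaps : ∀ g ∈ ({g : α → β | p (fiberCard g)} : Finset _),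
      fiberCard g ∈ ({n ∈ piAntidiag univ (Fintype.card α) | p n} : Finset _) := by
    intro g hg
    simp_all [mem_piAntidiag, sum_fiberCard]
  rw [← sum_fiberwise_of_maps_to hmaps]
  refine sum_congr rfl fun n hn => ?_
  rw [mem_filter, mem_piAntidiag] at hn
  have hfiber : ({g ∈ {g : α → β | p (fiberCard g)} | fiberCard g = n} : Finset _) =
      ({g | fiberCard g = n} : Finset (α → β)) := by
    ext g
    simp only [mem_filter, mem_univ, true_and, and_iff_right_iff_imp]
    rintro rfl
    exact hn.2
  rw [hfiber, ← card_filter_fiberCard_eq n hn.1.1, ← nsmul_eq_mul, ← sum_const]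
  refine sum_congr rfl fun g hg => ?_
  rw [prod_comp_eq_prod_pow_fiberCard, (mem_filter.mp hg).2]

end FiberCard

section ConsSnoc

variable {q' : ℕ}

theorem sum_cons_snoc_zero {M : Type*} [AddCommMonoid M] (a : M) (j : Fin q' → M) :
    ∑ b, (Fin.cons a (Fin.snoc j 0) : Fin (q' + 2) → M) b = a + ∑ i, j i := by
  rw [Fin.sum_univ_succ, Fin.sum_univ_castSucc]
  simp

theorem sum_succ_cons_snoc_zero {M : Type*} [AddCommMonoid M] (a : M) (j : Fin q' → M) :
    ∑ i : Fin (q' + 1), (Fin.cons a (Fin.snoc j 0) : Fin (q' + 2) → M) i.succ = ∑ i, j i := by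
  rw [Fin.sum_univ_castSucc]
  simp

theorem sum_mul_val_cons_snoc_zero (a : ℕ) (j : Fin q' → ℕ) :
    ∑ b, (Fin.cons a (Fin.snoc j 0) : Fin (q' + 2) → ℕ) b * b = ∑ i, (i.val + 1) * j i := by
  rw [Fin.sum_univ_succ, Fin.sum_univ_castSucc]
  simp [mul_comm]

theorem prod_pow_cons_snoc_zero {M : Type*} [CommMonoid M] (a : ℕ) (j : Fin q' → ℕ)
    (ρ : Fin (q' + 2) → M) :
    ∏ b, ρ b ^ (Fin.cons a (Fin.snoc j 0) : Fin (q' + 2) → ℕ) b =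
      ρ 0 ^ a * ∏ i, ρ i.castSucc.succ ^ j i := by
  rw [Fin.prod_univ_succ, Fin.prod_univ_castSucc]
  simp

theorem multinomial_cons_snoc_zero {K : Type*} [Field K] [CharZero K] (a : ℕ)
    (j : Fin q' → ℕ) :
    (Nat.multinomial univ (Fin.cons a (Fin.snoc j 0) : Fin (q' + 2) → ℕ) : K) =
      (a + ∑ i, j i)! / ((∏ i, ((j i)! : K)) * a !) := by
  have h := Nat.multinomial_spec univ (Fin.cons a (Fin.snoc j 0) : Fin (q' + 2) → ℕ)
  rw [Fin.prod_univ_succ, Fin.prod_univ_castSucc, sum_cons_snoc_zero] at h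
  simp only [Fin.cons_zero, Fin.cons_succ, Fin.snoc_castSucc, Fin.snoc_last,
    Nat.factorial_zero, mul_one] at h
  have hpos : (∏ i, ((j i)! : K)) * a ! ≠ 0 := by
    simp [prod_ne_zero_iff, Nat.factorial_ne_zero]
  rw [eq_div_iff hpos, ← h]
  push_cast
  ring

theorem cons_snoc_init_tail {α : Type*} (n : Fin (q' + 2) → α) :
    Fin.cons (n 0) (Fin.snoc (Fin.init (Fin.tail n)) (n (Fin.last _))) = n := by
  conv_rhs => rw [← Fin.cons_self_tail n, ← Fin.snoc_init_self (Fin.tail n)]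
  rfl

/-- A count profile `n : Fin (q' + 2) → ℕ` (`n b` blocks with `b` exceedances) of total weight
at most `q'` has `n (last) = 0`, so it is `Fin.cons (N - k) (Fin.snoc j 0)` for the tuple `j`
of the statement. -/
theorem sum_multinomial_div_eq_sum_piAntidiag {K : Type*} [Field K] [CharZero K] {N k : ℕ}
    (hN : q' ≤ N) (ρ : Fin (q' + 2) → K) :
    ∑ j ∈ Fintype.piFinset (fun _ : Fin q' => range (q' + 1)) with
        ∑ i, j i = k ∧ ∑ i, (i.val + 1) * j i ≤ q',
      (N ! : K) / ((∏ i, ((j i)! : K)) * (N - k)!) * ρ 0 ^ (N - k) *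
        ∏ i, ρ i.castSucc.succ ^ j i =
    ∑ n ∈ piAntidiag univ N with
        ∑ b : Fin (q' + 2), n b * (b : ℕ) ≤ q' ∧ ∑ i : Fin (q' + 1), n i.succ = k,
      (Nat.multinomial univ n : K) * ∏ b, ρ b ^ n b := by
  have hle : ∀ (j : Fin q' → ℕ) i, j i ≤ (i.val + 1) * j i := fun j i =>
    Nat.le_mul_of_pos_left _ i.val.succ_pos
  have hk : ∀ j ∈ ({j ∈ Fintype.piFinset (fun _ : Fin q' => range (q' + 1)) |
      ∑ i, j i = k ∧ ∑ i, (i.val + 1) * j i ≤ q'} : Finset _), k ≤ N := by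
    intro j hj
    rw [mem_filter] at hj
    exact hj.2.1 ▸ ((sum_le_sum fun i _ => hle j i).trans hj.2.2).trans hN
  have hcons : ∀ n ∈ ({n ∈ piAntidiag univ N | ∑ b : Fin (q' + 2), n b * (b : ℕ) ≤ q' ∧
      ∑ i : Fin (q' + 1), n i.succ = k} : Finset _),
      Fin.cons (N - k) (Fin.snoc (Fin.init (Fin.tail n)) 0) = n := by
    intro n hn
    simp only [mem_filter, mem_piAntidiag] at hn
    obtain ⟨⟨hsum, -⟩, hweight, hcount⟩ := hn
    have hlast : n (Fin.last _) = 0 := by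
      have := (single_le_sum (f := fun b : Fin (q' + 2) => n b * (b : ℕ)) (by simp)
        (mem_univ (Fin.last _))).trans hweight
      simp only [Fin.val_last] at this
      nlinarith
    have h0 : n 0 = N - k := by
      rw [Fin.sum_univ_succ, hcount] at hsum
      omega
    simpa only [h0, hlast] using cons_snoc_init_tail n
  refine sum_nbij' (fun j => Fin.cons (N - k) (Fin.snoc j 0)) (fun n => Fin.init (Fin.tail n))
    ?_ ?_ ?_ hcons ?_
  · intro j hj
    have hkN := hk j hj
    simp only [mem_filter] at hj
    simp only [mem_filter, mem_piAntidiag, sum_cons_snoc_zero, sum_mul_val_cons_snoc_zero,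
      sum_succ_cons_snoc_zero]
    exact ⟨⟨by omega, by simp⟩, hj.2.2, hj.2.1⟩
  · intro n hn
    rw [← hcons n hn] at hn
    simp only [mem_filter, mem_piAntidiag, sum_cons_snoc_zero, sum_mul_val_cons_snoc_zero,
      sum_succ_cons_snoc_zero] at hn
    simp only [mem_filter, Fintype.mem_piFinset, mem_range]
    refine ⟨fun i => Nat.lt_succ_of_le ((hle _ i).trans ?_), hn.2.2, hn.2.1⟩
    exact (single_le_sum (f := fun i : Fin q' => (i.val + 1) * _) (by simp)
      (mem_univ i)).trans hn.2.1
  · intro j _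
    simp [Fin.tail_cons, Fin.init_snoc]
  · intro j hj
    rw [multinomial_cons_snoc_zero, prod_pow_cons_snoc_zero, (mem_filter.mp hj).2.1,
      Nat.sub_add_cancel (hk j hj)]
    ring

theorem sum_prod_filter_eq_sum_multinomial_div {K : Type*} [Field K] [CharZero K] {N k : ℕ}
    (hN : q' ≤ N) (ρ : Fin (q' + 2) → K) :
    ∑ g : Fin N → Fin (q' + 2) with ∑ l, (g l : ℕ) ≤ q' ∧ #{l | 1 ≤ (g l : ℕ)} = k,
        ∏ l, ρ (g l) =
      ∑ j ∈ Fintype.piFinset (fun _ : Fin q' => range (q' + 1)) with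
          ∑ i, j i = k ∧ ∑ i, (i.val + 1) * j i ≤ q',
        (N ! : K) / ((∏ i, ((j i)! : K)) * (N - k)!) * ρ 0 ^ (N - k) *
          ∏ i, ρ i.castSucc.succ ^ j i := by
  have hprofile := sum_prod_comp_eq_sum_multinomial (α := Fin N)
    (fun n : Fin (q' + 2) → ℕ => ∑ b, n b * (b : ℕ) ≤ q' ∧ ∑ i : Fin (q' + 1), n i.succ = k) ρ
  rw [Fintype.card_fin] at hprofile
  rw [sum_multinomial_div_eq_sum_piAntidiag hN, ← hprofile]
  refine sum_congr (filter_congr fun g _ => ?_) fun _ _ => rfl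
  have hweight : ∑ l, (g l : ℕ) = ∑ b, fiberCard g b * (b : ℕ) := by
    simp only [sum_comp_eq_sum_nsmul_fiberCard, smul_eq_mul]
  have hpos : #{l | 1 ≤ (g l : ℕ)} = ∑ i : Fin (q' + 1), fiberCard g i.succ := by
    rw [card_filter,
      sum_comp_eq_sum_nsmul_fiberCard (fun b : Fin (q' + 2) => if 1 ≤ (b : ℕ) then 1 else 0),
      Fin.sum_univ_succ]
    simp
  rw [hweight, hpos]

end ConsSnoc

section Exceedances

variable {α : Type*} [LinearOrder α] {q : ℕ}

def exceedances (x : α) (v : Fin q → α) : Fin (q + 1) :=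
  ⟨#{i | x < v i}, Nat.lt_succ_of_le ((card_le_univ _).trans_eq (Fintype.card_fin q))⟩

theorem Antitone.lt_card_filter_lt_iff {v : Fin q → α} (hv : Antitone v) (x : α) {m : ℕ}
    (hm : m < q) :
    m < #{i | x < v i} ↔ x < v ⟨m, hm⟩ := by
  constructor
  · intro h
    by_contra hx
    have hsub : ({i | x < v i} : Finset (Fin q)) ⊆ Iio ⟨m, hm⟩ := fun i hi => by
      simp only [mem_filter, mem_univ, true_and] at hi
      rw [mem_Iio]
      by_contra hmi
      exact hx (hi.trans_le (hv (not_lt.mp hmi)))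
    have := card_le_card hsub
    simp only [Fin.card_Iio] at this
    omega
  · intro hx
    have hsub : Iic ⟨m, hm⟩ ⊆ ({i | x < v i} : Finset (Fin q)) := fun i hi => by
      simp only [mem_filter, mem_univ, true_and]
      exact hx.trans_le (hv (mem_Iic.mp hi))
    have := card_le_card hsub
    simp only [Fin.card_Iic] at this
    omega

theorem Antitone.exceedances_eq_zero_iff {v : Fin (q + 1) → α} (hv : Antitone v) (x : α) :
    exceedances x v = 0 ↔ v 0 ≤ x := by
  simpa [exceedances, Fin.ext_iff, pos_iff_ne_zero] using
    (hv.lt_card_filter_lt_iff x q.succ_pos).not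

theorem Antitone.exceedances_eq_succ_iff {v : Fin q → α} (hv : Antitone v) (x : α) {m : ℕ}
    (hm : m + 1 < q) :
    exceedances x v = ⟨m + 1, by omega⟩ ↔ v ⟨m + 1, hm⟩ ≤ x ∧ x < v ⟨m, by omega⟩ := by
  rw [Fin.ext_iff, ← not_lt, ← hv.lt_card_filter_lt_iff x hm, ← hv.lt_card_filter_lt_iff x]
  simp only [exceedances]
  omega

theorem measurable_exceedances [TopologicalSpace α] [OrderClosedTopology α] [MeasurableSpace α]
    [OpensMeasurableSpace α] (x : α) :
    Measurable (exceedances (q := q) x) := by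
  have hcount : Measurable fun v : Fin q → α => #{i | x < v i} := by
    simp only [card_filter]
    exact Finset.measurable_sum _ fun i _ =>
      Measurable.ite (measurableSet_Ioi.preimage (measurable_pi_apply i)) measurable_const
        measurable_const
  refine measurable_to_countable' fun m => ?_
  have hpre : exceedances x ⁻¹' {m} =
      (fun v : Fin q → α => #{i | x < v i}) ⁻¹' {(m : ℕ)} := by
    ext v
    simp [exceedances, Fin.ext_iff]
  rw [hpre]
  exact hcount (measurableSet_singleton _)

end Exceedances

section Independence

variable {Ω ι β : Type*} [MeasurableSpace Ω] {P : Measure Ω} [Fintype ι] [MeasurableSpace β]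
  [MeasurableSingletonClass β] {Y : ι → Ω → β}

theorem ProbabilityTheory.iIndepFun.measure_mem_finset (hY : ∀ l, Measurable (Y l))
    (hindep : iIndepFun Y P) (S : Finset (ι → β)) :
    P {ω | (fun l => Y l ω) ∈ S} = ∑ g ∈ S, ∏ l, P (Y l ⁻¹' {g l}) := by
  have hjoint : Measurable fun ω l => Y l ω := measurable_pi_lambda _ hY
  change P ((fun ω l => Y l ω) ⁻¹' S) = _
  rw [← sum_measure_preimage_singleton S fun g _ => hjoint (measurableSet_singleton g)]
  refine sum_congr rfl fun g _ => ?_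
  have hfiber : (fun ω l => Y l ω) ⁻¹' {g} = ⋂ l, Y l ⁻¹' {g l} := by
    ext ω
    simp [funext_iff]
  rw [hfiber, hindep.meas_iInter fun l => ⟨{g l}, measurableSet_singleton _, rfl⟩]

theorem ProbabilityTheory.iIndepFun.measure_mem_finset_of_identDistrib
    (hY : ∀ l, Measurable (Y l)) (hindep : iIndepFun Y P) {l₀ : ι}
    (hid : ∀ l, IdentDistrib (Y l) (Y l₀) P P) (S : Finset (ι → β)) :
    P {ω | (fun l => Y l ω) ∈ S} = ∑ g ∈ S, ∏ l, P (Y l₀ ⁻¹' {g l}) := by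
  simp only [hindep.measure_mem_finset hY,
    fun l b => (hid l).measure_mem_eq (measurableSet_singleton b)]

end Independence

/-- Let `(ζ_l⁽¹⁾, …, ζ_l⁽q⁾)`, `l = 1, …, N` (indexed here by `Fin N`),
be i.i.d. random vectors with values in `(ℝ ∪ {-∞})^q` (formalized as `EReal`-valued),
each a.s. nonincreasing in the upper index.  Fix a level `x` and let
`c_l := #{i : ζ_l⁽ⁱ⁾ > x}`.  Then for every `k ≤ q - 1`,
`P(∑_l c_l ≤ q-1, #{l : c_l ≥ 1} = k)` equals the multinomial sum
`∑_{(j_1,…,j_{q-1}) ∈ J_{q,k}} N!/(j_1!⋯j_{q-1}!(N-k)!) ·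
P(ζ⁽¹⁾ ≤ x)^{N-k} ∏_i P(ζ⁽ⁱ⁺¹⁾ ≤ x < ζ⁽ⁱ⁾)^{j_i}`,
where `J_{q,k}` is the set of `(j_1,…,j_{q-1}) ∈ ℕ^{q-1}` with `∑ j_i = k` and
`∑ i·j_i ≤ q-1`. -/
theorem block_exceedance_multinomial
    {Ω : Type*} [MeasurableSpace Ω] (P : Measure Ω) [IsProbabilityMeasure P]
    (q N : ℕ) (hq : 1 ≤ q) (hqN : q ≤ N)
    (ζ : Fin N → Ω → Fin q → EReal)
    (hmeas : ∀ l, Measurable (ζ l))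
    (hindep : iIndepFun ζ P)
    (hid : ∀ l, IdentDistrib (ζ l) (ζ ⟨0, by omega⟩) P P)
    (hmono : ∀ l, ∀ᵐ ω ∂P, Antitone (ζ l ω))
    (x : ℝ) (k : ℕ) :
    (P {ω | (∑ l : Fin N, Nat.card {i : Fin q // (x : EReal) < ζ l ω i}) ≤ q - 1 ∧
        Nat.card {l : Fin N // 1 ≤ Nat.card {i : Fin q // (x : EReal) < ζ l ω i}} = k}).toReal =
      ∑ j ∈ ((Fintype.piFinset (fun _ : Fin (q - 1) => Finset.range q)).filter
          (fun j => (∑ i, j i) = k ∧ (∑ i, (i.val + 1) * j i) ≤ q - 1)),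
        ((Nat.factorial N : ℝ) /
            ((∏ i, (Nat.factorial (j i) : ℝ)) * (Nat.factorial (N - k) : ℝ))) *
          (P {ω | ζ ⟨0, by omega⟩ ω ⟨0, by omega⟩ ≤ (x : EReal)}).toReal ^ (N - k) *
          ∏ i : Fin (q - 1),
            (P {ω | ζ ⟨0, by omega⟩ ω ⟨i.val + 1, by have := i.isLt; omega⟩ ≤ (x : EReal) ∧
                (x : EReal) < ζ ⟨0, by omega⟩ ω ⟨i.val, by have := i.isLt; omega⟩}).toReal ^
              (j i) := by
  obtain ⟨q', rfl⟩ : ∃ q', q = q' + 1 := ⟨q - 1, by omega⟩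
  set l₀ : Fin N := ⟨0, by omega⟩
  set Y : Fin N → Ω → Fin (q' + 2) := fun l ω => exceedances (x : EReal) (ζ l ω)
  have hY : ∀ l, Measurable (Y l) := fun l => (measurable_exceedances _).comp (hmeas l)
  have hevent : {ω | (∑ l : Fin N, Nat.card {i : Fin (q' + 1) // (x : EReal) < ζ l ω i}) ≤ q' ∧
      Nat.card {l : Fin N // 1 ≤ Nat.card {i : Fin (q' + 1) // (x : EReal) < ζ l ω i}} = k} =
      {ω | (fun l => Y l ω) ∈
        ({g | ∑ l, (g l : ℕ) ≤ q' ∧ #{l | 1 ≤ (g l : ℕ)} = k} : Finset _)} := by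
    ext ω
    simp [Y, exceedances, Nat.card_eq_fintype_card, Fintype.card_subtype]
  have hzero : P (Y l₀ ⁻¹' {0}) = P {ω | ζ l₀ ω ⟨0, q'.succ_pos⟩ ≤ (x : EReal)} :=
    measure_congr <| (hmono l₀).mono fun ω hω => propext (hω.exceedances_eq_zero_iff _)
  have hsucc : ∀ i : Fin q', P (Y l₀ ⁻¹' {i.castSucc.succ}) =
      P {ω | ζ l₀ ω ⟨i + 1, by omega⟩ ≤ (x : EReal) ∧ (x : EReal) < ζ l₀ ω ⟨i, by omega⟩} :=
    fun i => measure_congr <| (hmono l₀).mono fun ω hω =>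
      propext (hω.exceedances_eq_succ_iff _ (by omega))
  simp only [Nat.add_sub_cancel]
  rw [hevent, (hindep.comp _ fun _ => measurable_exceedances _).measure_mem_finset_of_identDistrib
    hY (fun l => (hid l).comp (measurable_exceedances _)),
    ENNReal.toReal_sum fun _ _ => ENNReal.prod_ne_top fun _ _ => measure_ne_top P _]
  simp only [ENNReal.toReal_prod]
  rw [sum_prod_filter_eq_sum_multinomial_div (by omega) fun b => (P (Y l₀ ⁻¹' {b})).toReal]
  simp only [hzero, hsucc]
  -- the goal still ranges over `Fin (q' + 1 - 1)`, which is `Fin q'` only definitionally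
  rfl
end

section
/- Let p ∈ (0,1/2), q := 1 − p, and let Z_0, Z_1, Z_2, … be i.i.d. with P(Z_0 = 1) = p and P(Z_0 = −1) = q. Define the reflected random walk (Lindley process) by X_0 := 0 and X_n := max{X_{n−1} + Z_{n−1}, 0} for n ≥ 1, and let τ_0 := inf{k > 0 : X_k = 0}. Then E[τ_0] = q/(q − p). -/
/-!
Until it first returns to `0`, the Lindley process coincides with the unreflected walk
`S n = Z 0 + ⋯ + Z (n - 1)`, so `τ₀ > m` is the event `A m` that `S 1, …, S m` are all positive,
and `E τ₀ = ∑ m, P (A m)`. The event `A m` is determined by `Z 0, …, Z (m - 1)`, hence independent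
of `Z m`, so Wald's argument for the walk stopped on leaving `(0, ∞)` gives
`(p - q) ∑_{m < n} P (A m) = E[S n; A n] - q`: the stopped walk exits at `0`, or at `-1` when the
first step is `-1`. Since `0 ≤ E[S n; A n] ≤ n P (A n)`, the partial sums of `P (A m)` are bounded
by `q / (q - p)`; summability of the antitone sequence `P (A m)` then forces `n P (A n) → 0`, and
the sum equals `q / (q - p)`.
-/

open MeasureTheory ProbabilityTheory Filter Topology
open scoped ENNReal

lemma forall_mem_Icc_one_succ {P : ℕ → Prop} {n : ℕ} :
    (∀ k ∈ Finset.Icc 1 (n + 1), P k) ↔ (∀ k ∈ Finset.Icc 1 n, P k) ∧ P (n + 1) := by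
  simp only [Finset.mem_Icc]
  refine ⟨fun h => ⟨fun k hk => h k ⟨hk.1, by omega⟩, h _ ⟨by omega, le_rfl⟩⟩, ?_⟩
  rintro ⟨h, hn⟩ k ⟨hk1, hk⟩
  rcases hk.lt_or_eq with hk | rfl
  · exact h k ⟨hk1, by omega⟩
  · exact hn

open Classical in
lemma sInf_natCast_pos_eq_tsum (Q : ℕ → Prop) :
    sInf {t : ℝ≥0∞ | ∃ k : ℕ, t = k ∧ 0 < k ∧ Q k} =
      ∑' m : ℕ, if ∀ k ∈ Finset.Icc 1 m, ¬ Q k then 1 else 0 := by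
  by_cases hQ : ∃ k, 0 < k ∧ Q k
  · have hbefore : ∀ m, (∀ k ∈ Finset.Icc 1 m, ¬ Q k) ↔ m < Nat.find hQ := fun m => by
      rw [Nat.lt_find_iff]
      simp only [Finset.mem_Icc, not_and]
      exact ⟨fun h k hk hk0 => h k ⟨hk0, hk⟩, fun h k hk => h k hk.2 hk.1⟩
    have hsum : ∑' m : ℕ, (if ∀ k ∈ Finset.Icc 1 m, ¬ Q k then 1 else 0 : ℝ≥0∞) =
        Nat.find hQ := by
      simp_rw [hbefore]
      rw [tsum_eq_sum (s := Finset.range (Nat.find hQ)) (by simp),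
        Finset.sum_congr rfl fun m hm => if_pos (Finset.mem_range.1 hm)]
      simp
    rw [hsum]
    refine IsLeast.csInf_eq ⟨⟨_, rfl, Nat.find_spec hQ⟩, ?_⟩
    rintro _ ⟨k, rfl, hk⟩
    exact_mod_cast Nat.find_min' hQ hk
  · push Not at hQ
    have hempty : {t : ℝ≥0∞ | ∃ k : ℕ, t = k ∧ 0 < k ∧ Q k} = ∅ := by
      ext t
      simpa using fun k _ hk => hQ k hk
    have hall : ∀ m : ℕ, ∀ k ∈ Finset.Icc 1 m, ¬ Q k := fun m k hk =>
      hQ k (Finset.mem_Icc.1 hk).1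
    rw [hempty, sInf_empty]
    simp_rw [if_pos (hall _)]
    exact (ENNReal.tsum_const_eq_top_of_ne_zero one_ne_zero).symm

lemma tendsto_nat_mul_of_antitone_of_summable {a : ℕ → ℝ} (ha : Antitone a) (hs : Summable a) :
    Tendsto (fun n : ℕ => n * a n) atTop (𝓝 0) := by
  have ha0 : ∀ n, 0 ≤ a n := ha.le_of_tendsto hs.tendsto_atTop_zero
  have htail : Tendsto (fun n => ∑ i ∈ Finset.range n, a i - ∑ i ∈ Finset.range (n / 2), a i)
      atTop (𝓝 0) := by
    have h := hs.hasSum.tendsto_sum_nat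
    simpa using h.sub (h.comp (Nat.tendsto_div_const_atTop two_ne_zero))
  refine squeeze_zero (fun n => mul_nonneg n.cast_nonneg (ha0 n)) (fun n => ?_)
    (by simpa using htail.const_mul 2)
  have hcard : ((n - n / 2 : ℕ) : ℝ) * a n ≤ ∑ i ∈ Finset.Ico (n / 2) n, a i := by
    simpa using Finset.card_nsmul_le_sum (Finset.Ico (n / 2) n) a (a n)
      fun i hi => ha (Finset.mem_Ico.1 hi).2.le
  have hn : (n : ℝ) ≤ 2 * ((n - n / 2 : ℕ) : ℝ) := by
    exact_mod_cast (by omega : n ≤ 2 * (n - n / 2))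
  rw [Finset.sum_Ico_eq_sub _ (Nat.div_le_self n 2)] at hcard
  nlinarith [ha0 n]

lemma hasSum_of_mul_sum_range_add_eq {a b : ℕ → ℝ} {c d : ℝ} (hc : 0 < c) (ha : Antitone a)
    (ha0 : ∀ n, 0 ≤ a n) (hb0 : ∀ n, 0 ≤ b n) (hb : ∀ n, b n ≤ n * a n)
    (h : ∀ n, 1 ≤ n → c * ∑ m ∈ Finset.range n, a m + b n = d) : HasSum a (d / c) := by
  have hbound : ∀ n, ∑ m ∈ Finset.range n, a m ≤ d / c := fun n => by
    have := h (n + 1) le_add_self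
    rw [le_div_iff₀ hc, Finset.sum_range_succ] at *
    nlinarith [ha0 n, hb0 (n + 1)]
  have hb_lim : Tendsto b atTop (𝓝 0) := squeeze_zero hb0 hb
    (tendsto_nat_mul_of_antitone_of_summable ha (summable_of_sum_range_le ha0 hbound))
  rw [hasSum_iff_tendsto_nat_of_nonneg ha0]
  refine (by simpa using (tendsto_const_nhds.sub hb_lim).div_const c :
    Tendsto (fun n => (d - b n) / c) atTop (𝓝 (d / c))).congr' ?_
  filter_upwards [eventually_ge_atTop 1] with n hn
  rw [div_eq_iff hc.ne', ← h n hn]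
  ring

section PlusMinusOne

variable {Ω : Type*} [MeasurableSpace Ω] {P : Measure Ω} [IsProbabilityMeasure P] {Y : Ω → ℤ}
  {p q : ℝ}

lemma ae_eq_one_or_neg_one (hY : Measurable Y) (hp : 0 ≤ p) (hq : 0 ≤ q) (hpq : p + q = 1)
    (hup : P {ω | Y ω = 1} = ENNReal.ofReal p) (hdown : P {ω | Y ω = -1} = ENNReal.ofReal q) :
    ∀ᵐ ω ∂P, Y ω = 1 ∨ Y ω = -1 := by
  have h1 : MeasurableSet {ω | Y ω = 1} := hY (measurableSet_singleton 1)
  have h2 : MeasurableSet {ω | Y ω = -1} := hY (measurableSet_singleton (-1))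
  rw [ae_iff_measure_eq (p := fun ω => Y ω = 1 ∨ Y ω = -1) (h1.union h2).nullMeasurableSet,
    Set.ofPred_or,
    measure_union (Set.disjoint_left.2 fun ω h h' => by simp_all) h2, hup, hdown,
    ← ENNReal.ofReal_add hp hq, hpq, measure_univ, ENNReal.ofReal_one]

lemma integral_eq_sub_of_ae_eq_one_or_neg_one (hY : Measurable Y) (hp : 0 ≤ p) (hq : 0 ≤ q)
    (hup : P {ω | Y ω = 1} = ENNReal.ofReal p) (hdown : P {ω | Y ω = -1} = ENNReal.ofReal q)
    (hpm : ∀ᵐ ω ∂P, Y ω = 1 ∨ Y ω = -1) :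
    ∫ ω, (Y ω : ℝ) ∂P = p - q := by
  have h1 : MeasurableSet {ω | Y ω = 1} := hY (measurableSet_singleton 1)
  have h2 : MeasurableSet {ω | Y ω = -1} := hY (measurableSet_singleton (-1))
  have hae : (fun ω => (Y ω : ℝ)) =ᵐ[P]
      {ω | Y ω = 1}.indicator 1 - {ω | Y ω = -1}.indicator 1 := by
    filter_upwards [hpm] with ω hω
    rcases hω with h | h <;> simp [h]
  rw [integral_congr_ae hae, integral_sub' ((integrable_const 1).indicator h1)
    ((integrable_const 1).indicator h2), integral_indicator_one h1, integral_indicator_one h2,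
    measureReal_def, measureReal_def, hup, hdown, ENNReal.toReal_ofReal hp,
    ENNReal.toReal_ofReal hq]

lemma integrable_of_ae_eq_one_or_neg_one (hY : Measurable Y)
    (hpm : ∀ᵐ ω ∂P, Y ω = 1 ∨ Y ω = -1) : Integrable (fun ω => (Y ω : ℝ)) P :=
  .of_bound (measurable_from_top.comp hY).aestronglyMeasurable 1 <| by
    filter_upwards [hpm] with ω hω
    rcases hω with h | h <;> simp [h]

end PlusMinusOne

namespace Lindley

section Paths

variable {Ω : Type*} (Z : ℕ → Ω → ℤ)

def partialSum (n : ℕ) (ω : Ω) : ℤ := ∑ i ∈ Finset.range n, Z i ω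

/-- The event `{τ₀ > n}`. -/
def survivalSet (n : ℕ) : Set Ω := {ω | ∀ k ∈ Finset.Icc 1 n, 0 < partialSum Z k ω}

@[simp] lemma partialSum_zero (ω : Ω) : partialSum Z 0 ω = 0 := by simp [partialSum]

lemma partialSum_succ (n : ℕ) (ω : Ω) : partialSum Z (n + 1) ω = partialSum Z n ω + Z n ω :=
  Finset.sum_range_succ _ _

@[simp] lemma survivalSet_zero : survivalSet Z 0 = Set.univ := by
  ext; simp [survivalSet]

lemma mem_survivalSet_succ {n : ℕ} {ω : Ω} :
    ω ∈ survivalSet Z (n + 1) ↔ ω ∈ survivalSet Z n ∧ 0 < partialSum Z (n + 1) ω :=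
  forall_mem_Icc_one_succ

lemma survivalSet_antitone : Antitone (survivalSet Z) :=
  antitone_nat_of_succ_le fun _ _ h => ((mem_survivalSet_succ Z).1 h).1

variable {Z}

lemma partialSum_nonneg_of_mem_survivalSet {n : ℕ} {ω : Ω} (h : ω ∈ survivalSet Z n) :
    0 ≤ partialSum Z n ω := by
  rcases n with _ | n
  · simp
  · exact (h (n + 1) (by simp)).le

lemma partialSum_le {ω : Ω} (h : ∀ i, Z i ω ≤ 1) (n : ℕ) : partialSum Z n ω ≤ n := by
  simpa [partialSum] using Finset.sum_le_card_nsmul (Finset.range n) (Z · ω) 1 fun i _ => h i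

/-- A walk with steps `≥ -1` that is positive at a time `m ≥ 1` can leave `(0, ∞)` only
through `0`. -/
lemma indicator_step_eq_sub {m : ℕ} (hm : 1 ≤ m) {ω : Ω} (hZ : -1 ≤ Z m ω) :
    (survivalSet Z m).indicator (fun ω => (Z m ω : ℝ)) ω =
      (survivalSet Z (m + 1)).indicator (fun ω => (partialSum Z (m + 1) ω : ℝ)) ω -
        (survivalSet Z m).indicator (fun ω => (partialSum Z m ω : ℝ)) ω := by
  have hsucc := partialSum_succ Z m ω
  by_cases hA : ω ∈ survivalSet Z m
  · have hpos : 0 < partialSum Z m ω := hA m (Finset.mem_Icc.2 ⟨hm, le_rfl⟩)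
    by_cases hA' : ω ∈ survivalSet Z (m + 1)
    · simp only [Set.indicator_of_mem hA, Set.indicator_of_mem hA', hsucc]
      push_cast; ring
    · have hzero : partialSum Z (m + 1) ω = 0 := by
        have := not_and.1 ((mem_survivalSet_succ Z).not.1 hA') hA
        omega
      simp only [Set.indicator_of_mem hA, Set.indicator_of_notMem hA', zero_sub]
      have : Z m ω = -partialSum Z m ω := by omega
      exact_mod_cast this
  · have hA' : ω ∉ survivalSet Z (m + 1) := fun h => hA ((mem_survivalSet_succ Z).1 h).1
    simp [Set.indicator_of_notMem hA, Set.indicator_of_notMem hA']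

/-- The stopped walk exits `(0, ∞)` at `0`, except when the first step is `-1`. -/
lemma sum_indicator_step_eq {ω : Ω} (hZ : ∀ j, Z j ω = 1 ∨ Z j ω = -1) {n : ℕ} (hn : 1 ≤ n) :
    ∑ m ∈ Finset.range n, (survivalSet Z m).indicator (fun ω => (Z m ω : ℝ)) ω =
      (survivalSet Z n).indicator (fun ω => (partialSum Z n ω : ℝ)) ω -
        {ω | Z 0 ω = -1}.indicator 1 ω := by
  induction n, hn using Nat.le_induction with
  | base =>
    have hS : partialSum Z (0 + 1) ω = Z 0 ω := by simp [partialSum]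
    rcases hZ 0 with h | h
    · have hA : ω ∈ survivalSet Z 1 := (mem_survivalSet_succ Z).2 ⟨by simp, by omega⟩
      simp [Set.indicator_of_mem hA, hS, h]
    · have hA : ω ∉ survivalSet Z 1 := fun hA => by
        have := ((mem_survivalSet_succ Z).1 hA).2
        omega
      simp [Set.indicator_of_notMem hA, h]
  | succ n hn ih =>
    have hstep : -1 ≤ Z n ω := by rcases hZ n with h | h <;> omega
    rw [Finset.sum_range_succ, ih, indicator_step_eq_sub hn hstep]
    ring

end Paths

section Recursion

variable {Ω : Type*} {Z X : ℕ → Ω → ℤ}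

lemma lindley_eq_partialSum (hX0 : ∀ ω, X 0 ω = 0)
    (hXrec : ∀ n ω, X (n + 1) ω = max (X n ω + Z n ω) 0) {n : ℕ} {ω : Ω}
    (h : ω ∈ survivalSet Z n) : X n ω = partialSum Z n ω := by
  induction n with
  | zero => simp [hX0]
  | succ n ih =>
    obtain ⟨hn, hpos⟩ := (mem_survivalSet_succ Z).1 h
    rw [hXrec, ih hn, ← partialSum_succ, max_eq_left hpos.le]

lemma mem_survivalSet_iff_lindley_ne_zero (hX0 : ∀ ω, X 0 ω = 0)
    (hXrec : ∀ n ω, X (n + 1) ω = max (X n ω + Z n ω) 0) {n : ℕ} {ω : Ω} :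
    ω ∈ survivalSet Z n ↔ ∀ k ∈ Finset.Icc 1 n, X k ω ≠ 0 := by
  induction n with
  | zero => simp
  | succ n ih =>
    rw [mem_survivalSet_succ, forall_mem_Icc_one_succ, ← ih]
    refine and_congr_right fun h => ?_
    rw [hXrec, lindley_eq_partialSum hX0 hXrec h, ← partialSum_succ]
    omega

lemma lindley_returnTime_eq_tsum (hX0 : ∀ ω, X 0 ω = 0)
    (hXrec : ∀ n ω, X (n + 1) ω = max (X n ω + Z n ω) 0) (ω : Ω) :
    sInf {t : ℝ≥0∞ | ∃ k : ℕ, t = k ∧ 0 < k ∧ X k ω = 0} =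
      ∑' m : ℕ, (survivalSet Z m).indicator 1 ω := by
  rw [sInf_natCast_pos_eq_tsum]
  refine tsum_congr fun m => ?_
  classical
  simp only [Set.indicator_apply, mem_survivalSet_iff_lindley_ne_zero hX0 hXrec, Pi.one_apply]
  congr

end Recursion

section Measure

variable {Ω : Type*} {Z : ℕ → Ω → ℤ}

lemma measurableSet_survivalSet_biSup_comap (n : ℕ) :
    MeasurableSet[⨆ i ∈ Set.Iio n, MeasurableSpace.comap (Z i) inferInstance]
      (survivalSet Z n) := by
  have hS : ∀ k ≤ n, Measurable[⨆ i ∈ Set.Iio n, MeasurableSpace.comap (Z i) inferInstance]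
      (partialSum Z k) := fun k hk =>
    Finset.measurable_sum _ fun i hi => (comap_measurable (Z i)).mono
      (le_iSup₂ (f := fun i (_ : i ∈ Set.Iio n) => MeasurableSpace.comap (Z i) inferInstance) i
        (lt_of_lt_of_le (Finset.mem_range.1 hi) hk)) le_rfl
  simp only [survivalSet, Set.ofPred_forall]
  exact MeasurableSet.iInter fun k => MeasurableSet.iInter fun hk =>
    measurableSet_lt measurable_const (hS k (Finset.mem_Icc.1 hk).2)

variable [MeasurableSpace Ω]

lemma measurableSet_survivalSet (hmeas : ∀ n, Measurable (Z n)) (n : ℕ) :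
    MeasurableSet (survivalSet Z n) :=
  iSup₂_le (fun i _ => (hmeas i).comap_le) _ (measurableSet_survivalSet_biSup_comap n)

variable {P : Measure Ω}

lemma indepFun_indicator_survivalSet (hmeas : ∀ n, Measurable (Z n)) (hindep : iIndepFun Z P)
    (m : ℕ) :
    IndepFun ((survivalSet Z m).indicator (1 : Ω → ℝ)) (fun ω => (Z m ω : ℝ)) P := by
  have h := indep_iSup_of_disjoint (fun i => (hmeas i).comap_le)
    ((iIndepFun_iff_iIndep _ _ _).1 hindep) (S := Set.Iio m) (T := {m}) (by simp)
  rw [iSup_singleton] at h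
  rw [IndepFun_iff_Indep]
  refine indep_of_indep_of_le_right (indep_of_indep_of_le_left h ?_) ?_
  · exact (measurable_const.indicator (measurableSet_survivalSet_biSup_comap m)).comap_le
  · exact (measurable_from_top.comp (comap_measurable (Z m))).comap_le

lemma integral_indicator_survivalSet_step (hmeas : ∀ n, Measurable (Z n))
    (hindep : iIndepFun Z P) (m : ℕ) :
    ∫ ω, (survivalSet Z m).indicator (fun ω => (Z m ω : ℝ)) ω ∂P =
      P.real (survivalSet Z m) * ∫ ω, (Z m ω : ℝ) ∂P := by
  have hA := measurableSet_survivalSet hmeas m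
  have hmul : (survivalSet Z m).indicator (fun ω => (Z m ω : ℝ)) =
      fun ω => (survivalSet Z m).indicator 1 ω * (Z m ω : ℝ) := by
    ext ω
    by_cases h : ω ∈ survivalSet Z m <;> simp [h]
  rw [hmul, (indepFun_indicator_survivalSet hmeas hindep m).integral_fun_mul_eq_mul_integral
    (measurable_const.indicator hA).aestronglyMeasurable
    (measurable_from_top.comp (hmeas m)).aestronglyMeasurable, integral_indicator_one hA]

end Measure

lemma lintegral_lindley_returnTime {Ω : Type*} [MeasurableSpace Ω] {P : Measure Ω}
    {Z X : ℕ → Ω → ℤ} (hmeas : ∀ n, Measurable (Z n)) (hX0 : ∀ ω, X 0 ω = 0)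
    (hXrec : ∀ n ω, X (n + 1) ω = max (X n ω + Z n ω) 0) :
    ∫⁻ ω, sInf {t : ℝ≥0∞ | ∃ k : ℕ, t = k ∧ 0 < k ∧ X k ω = 0} ∂P =
      ∑' m, P (survivalSet Z m) := by
  simp_rw [lindley_returnTime_eq_tsum hX0 hXrec]
  rw [lintegral_tsum fun m =>
    (measurable_one.indicator (measurableSet_survivalSet hmeas m)).aemeasurable]
  simp [lintegral_indicator_one (measurableSet_survivalSet hmeas _)]

section Wald

variable {Ω : Type*} [MeasurableSpace Ω] {P : Measure Ω} {Z : ℕ → Ω → ℤ}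

lemma integral_indicator_partialSum_nonneg (n : ℕ) :
    0 ≤ ∫ ω, (survivalSet Z n).indicator (fun ω => (partialSum Z n ω : ℝ)) ω ∂P :=
  integral_nonneg <| Set.indicator_nonneg fun _ h => by
    exact_mod_cast partialSum_nonneg_of_mem_survivalSet h

variable [IsProbabilityMeasure P]

lemma integral_indicator_partialSum_le (hmeas : ∀ n, Measurable (Z n))
    (hle : ∀ᵐ ω ∂P, ∀ j, Z j ω ≤ 1) (n : ℕ) :
    ∫ ω, (survivalSet Z n).indicator (fun ω => (partialSum Z n ω : ℝ)) ω ∂P ≤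
      n * P.real (survivalSet Z n) := by
  have hA := measurableSet_survivalSet hmeas n
  calc ∫ ω, (survivalSet Z n).indicator (fun ω => (partialSum Z n ω : ℝ)) ω ∂P
      ≤ ∫ ω, (survivalSet Z n).indicator (fun _ => (n : ℝ)) ω ∂P := by
        refine integral_mono_of_nonneg (.of_forall fun ω => ?_)
          ((integrable_const _).indicator hA) ?_
        · exact Set.indicator_nonneg (fun _ h => by
            exact_mod_cast partialSum_nonneg_of_mem_survivalSet h) ω
        · filter_upwards [hle] with ω hω
          exact Set.indicator_le_indicator (by exact_mod_cast partialSum_le hω n)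
    _ = n * P.real (survivalSet Z n) := by
        rw [integral_indicator_const _ hA, smul_eq_mul, mul_comm]

variable {p q : ℝ}

lemma wald_identity_truncated (hmeas : ∀ n, Measurable (Z n)) (hindep : iIndepFun Z P)
    (hpm : ∀ᵐ ω ∂P, ∀ j, Z j ω = 1 ∨ Z j ω = -1) (hmean : ∀ m, ∫ ω, (Z m ω : ℝ) ∂P = p - q)
    (hdown : P.real {ω | Z 0 ω = -1} = q) {n : ℕ} (hn : 1 ≤ n) :
    (q - p) * ∑ m ∈ Finset.range n, P.real (survivalSet Z m) +
      ∫ ω, (survivalSet Z n).indicator (fun ω => (partialSum Z n ω : ℝ)) ω ∂P = q := by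
  have hZint : ∀ j, Integrable (fun ω => (Z j ω : ℝ)) P := fun j =>
    integrable_of_ae_eq_one_or_neg_one (hmeas j) (hpm.mono fun _ h => h j)
  have hA := measurableSet_survivalSet hmeas
  have hSint : Integrable (fun ω => (partialSum Z n ω : ℝ)) P := by
    simp only [partialSum, Int.cast_sum]
    exact integrable_finsetSum _ fun j _ => hZint j
  have hdown_meas : MeasurableSet {ω | Z 0 ω = -1} := hmeas 0 (measurableSet_singleton _)
  have hdown_int : Integrable ({ω | Z 0 ω = -1}.indicator (1 : Ω → ℝ)) P :=
    (integrable_const 1).indicator hdown_meas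
  have hsum := integral_finsetSum (Finset.range n) fun m _ => (hZint m).indicator (hA m)
  have hstopped : (fun ω => ∑ m ∈ Finset.range n,
      (survivalSet Z m).indicator (fun ω => (Z m ω : ℝ)) ω) =ᵐ[P]
      (survivalSet Z n).indicator (fun ω => (partialSum Z n ω : ℝ)) -
        {ω | Z 0 ω = -1}.indicator 1 := by
    filter_upwards [hpm] with ω hω using sum_indicator_step_eq hω hn
  rw [integral_congr_ae hstopped, integral_sub' (hSint.indicator (hA n))
    hdown_int, integral_indicator_one hdown_meas, hdown] at hsum
  simp only [integral_indicator_survivalSet_step hmeas hindep, hmean] at hsum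
  rw [← Finset.sum_mul] at hsum
  linarith

end Wald

end Lindley

open Lindley

/-- For the Lindley process (reflected simple random walk) driven by
i.i.d. `±1` steps with up-probability `p < 1/2`, the expected first return time to `0`
equals `q / (q - p)`, where `q = 1 - p`. -/
theorem lindley_expected_return_time
    {Ω : Type*} [MeasurableSpace Ω] (P : Measure Ω) [IsProbabilityMeasure P]
    (p q : ℝ) (hp : p ∈ Set.Ioo (0 : ℝ) (1 / 2)) (hq : q = 1 - p)
    (Z : ℕ → Ω → ℤ)
    (hmeas : ∀ n, Measurable (Z n))
    (hindep : iIndepFun Z P)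
    (hid : ∀ n, IdentDistrib (Z n) (Z 0) P P)
    (hup : P {ω | Z 0 ω = 1} = ENNReal.ofReal p)
    (hdown : P {ω | Z 0 ω = -1} = ENNReal.ofReal q)
    (X : ℕ → Ω → ℤ)
    (hX0 : ∀ ω, X 0 ω = 0)
    (hXrec : ∀ n ω, X (n + 1) ω = max (X n ω + Z n ω) 0)
    (τ₀ : Ω → ℝ≥0∞)
    (hτ₀ : ∀ ω, τ₀ ω = sInf {t : ℝ≥0∞ | ∃ k : ℕ, t = k ∧ 0 < k ∧ X k ω = 0}) :
    ∫⁻ ω, τ₀ ω ∂P = ENNReal.ofReal (q / (q - p)) := by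
  obtain ⟨hp0, hp_half⟩ := hp
  have hq0 : 0 ≤ q := by linarith
  have hdist : ∀ m (k : ℤ), P {ω | Z m ω = k} = P {ω | Z 0 ω = k} := fun m k =>
    (hid m).measure_mem_eq (measurableSet_singleton k)
  have hpm : ∀ᵐ ω ∂P, ∀ j, Z j ω = 1 ∨ Z j ω = -1 := ae_all_iff.2 fun j =>
    ae_eq_one_or_neg_one (hmeas j) hp0.le hq0 (by linarith) (by rw [hdist, hup])
      (by rw [hdist, hdown])
  have hmean : ∀ m, ∫ ω, (Z m ω : ℝ) ∂P = p - q := fun m =>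
    integral_eq_sub_of_ae_eq_one_or_neg_one (hmeas m) hp0.le hq0 (by rw [hdist, hup])
      (by rw [hdist, hdown]) (hpm.mono fun _ h => h m)
  have hsum : HasSum (fun m => P.real (survivalSet Z m)) (q / (q - p)) :=
    hasSum_of_mul_sum_range_add_eq (by linarith)
      (fun _ _ h => measureReal_mono (survivalSet_antitone Z h)) (fun _ => measureReal_nonneg)
      integral_indicator_partialSum_nonneg
      (integral_indicator_partialSum_le hmeas
        (hpm.mono fun _ h j => by rcases h j with h | h <;> omega))
      fun n hn => wald_identity_truncated hmeas hindep hpm hmean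
        (by rw [measureReal_def, hdown, ENNReal.toReal_ofReal hq0]) hn
  simp_rw [hτ₀]
  rw [lintegral_lindley_returnTime hmeas hX0 hXrec, ← hsum.tsum_eq,
    ENNReal.ofReal_tsum_of_nonneg (fun _ => measureReal_nonneg) hsum.summable]
  simp [ofReal_measureReal]
end

section
/- Let p ∈ (0,1/2), q := 1 − p, and let Z_0, Z_1, Z_2, … be i.i.d. with P(Z_0 = 1) = p and P(Z_0 = −1) = q. Define X_0 := 0, X_n := max{X_{n−1} + Z_{n−1}, 0}, τ_0 := inf{k > 0 : X_k = 0}, and let ζ := max{X_k : 0 ≤ k < τ_0} be the maximum over the first cycle. Then for every integer m ≥ 1: P(ζ ≤ m) = q + p · ((q/p)^{m+1} − (q/p)) / ((q/p)^{m+1} − 1). -/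
/-!
Up to the first return to `0`, the Lindley process coincides with the free walk
`X₁ + Z₁ + ⋯ + Zₖ`. So `ζ ≤ m` holds when the first step is down (probability `q`) and when
it is up and the walk from `1` driven by `Z₁, Z₂, …` then reaches `0` before leaving
`(0, m]`, while `ζ ≤ m` fails when that walk reaches `m + 1` first. Conditioning on the first
step, which is independent of the shifted sequence and leaves its law unchanged, the
probabilities of reaching `0`, resp. `m + 1`, before leaving `(0, m]` satisfy the gambler's
ruin recurrence `f x = p f (x + 1) + q f (x - 1)` for `0 < x ≤ m`; solving it with the
boundary values gives `(r^{m+1} - r) / (r^{m+1} - 1)`, resp. `(r - 1) / (r^{m+1} - 1)`,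
from `x = 1`, where `r = q / p`. These add up to `1`, which squeezes `P(ζ ≤ m)` between
two equal bounds.
-/

open MeasureTheory ProbabilityTheory
open scoped ENNReal

section Walk

variable {G : Type*} [AddCommMonoid G]

def walk (x : G) (z : ℕ → G) (k : ℕ) : G := x + ∑ i ∈ Finset.range k, z i

@[simp] lemma walk_zero (x : G) (z : ℕ → G) : walk x z 0 = x := by simp [walk]

lemma walk_succ (x : G) (z : ℕ → G) (k : ℕ) : walk x z (k + 1) = walk x z k + z k := by
  simp [walk, Finset.sum_range_succ, add_assoc]

lemma walk_succ' (x : G) (z : ℕ → G) (k : ℕ) :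
    walk x z (k + 1) = walk (x + z 0) (fun i ↦ z (i + 1)) k := by
  simp [walk, Finset.sum_range_succ', add_assoc, add_comm (z 0)]

def ReachesThrough (S : Set G) (x t : G) (z : ℕ → G) : Prop :=
  ∃ n, walk x z n = t ∧ ∀ k < n, walk x z k ∈ S

lemma reachesThrough_iff_of_notMem {S : Set G} {x : G} (hx : x ∉ S) (t : G) (z : ℕ → G) :
    ReachesThrough S x t z ↔ x = t := by
  constructor
  · rintro ⟨_ | n, hn, hS⟩
    · simpa using hn
    · exact absurd (by simpa using hS 0 n.succ_pos) hx
  · rintro rfl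
    exact ⟨0, walk_zero x z, by simp⟩

lemma reachesThrough_iff_of_mem {S : Set G} {x t : G} (hx : x ∈ S) (ht : t ∉ S) (z : ℕ → G) :
    ReachesThrough S x t z ↔ ReachesThrough S (x + z 0) t (fun i ↦ z (i + 1)) := by
  constructor
  · rintro ⟨_ | n, hn, hS⟩
    · exact absurd (by simpa [← hn] using hx) ht
    · exact ⟨n, walk_succ' x z n ▸ hn, fun k hk ↦ walk_succ' x z k ▸ hS (k + 1) (by omega)⟩
  · rintro ⟨n, hn, hS⟩
    refine ⟨n + 1, (walk_succ' x z n).trans hn, fun k hk ↦ ?_⟩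
    rcases k with _ | k
    · simpa using hx
    · exact (walk_succ' x z k).symm ▸ hS k (by omega)

lemma measurableSet_reachesThrough [MeasurableSpace G] [MeasurableSingletonClass G]
    [MeasurableAdd₂ G] {S : Set G} (hS : MeasurableSet S) (x t : G) :
    MeasurableSet {z : ℕ → G | ReachesThrough S x t z} := by
  have hwalk (k : ℕ) : Measurable fun z : ℕ → G ↦ walk x z k := by
    unfold walk; fun_prop
  simp only [ReachesThrough, Set.ofPred_exists, Set.ofPred_and, Set.ofPred_forall]
  exact .iUnion fun n ↦ (hwalk n (measurableSet_singleton t)).inter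
    (.iInter fun k ↦ .iInter fun _ ↦ hwalk k hS)

end Walk

namespace ProbabilityTheory

variable {Ω β : Type*} [MeasurableSpace Ω] [MeasurableSpace β] {P : Measure Ω} {Z : ℕ → Ω → β}

theorem iIndepFun.map_comp_eq_map [IsProbabilityMeasure P] (hmeas : ∀ n, Measurable (Z n))
    (hindep : iIndepFun Z P) (hid : ∀ n, IdentDistrib (Z n) (Z 0) P P) {f : ℕ → ℕ}
    (hf : f.Injective) :
    P.map (fun ω i ↦ Z (f i) ω) = P.map (fun ω i ↦ Z i ω) := by
  rw [(hindep.precomp hf).map_fun_eq_infinitePi_map (fun i ↦ hmeas (f i)),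
    hindep.map_fun_eq_infinitePi_map hmeas]
  simp only [(hid _).map_eq]

theorem iIndepFun.indepFun_head_tail (hmeas : ∀ n, Measurable (Z n))
    (hindep : iIndepFun Z P) : IndepFun (Z 0) (fun ω i ↦ Z (i + 1) ω) P := by
  have h := indep_iSup_of_disjoint (fun n ↦ (hmeas n).comap_le) hindep.iIndep
    (S := {0}) (T := Set.Ioi 0) (by simp)
  have htail : Measurable[⨆ i ∈ Set.Ioi 0, (inferInstance : MeasurableSpace β).comap (Z i)]
      fun ω i ↦ Z (i + 1) ω := @measurable_pi_lambda _ _ _ (_) _ _ fun i ↦ (comap_measurable _).mono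
    (le_iSup₂_of_le (f := fun i (_ : i ∈ Set.Ioi 0) ↦ _) (i + 1) i.succ_pos le_rfl) le_rfl
  rw [IndepFun_iff_Indep]
  refine indep_of_indep_of_le_right (indep_of_indep_of_le_left h ?_) htail.comap_le
  exact le_iSup₂_of_le (f := fun i (_ : i ∈ ({0} : Set ℕ)) ↦ _) 0 rfl le_rfl

theorem iIndepFun.measureReal_head_inter_tail [IsProbabilityMeasure P]
    (hmeas : ∀ n, Measurable (Z n)) (hindep : iIndepFun Z P)
    (hid : ∀ n, IdentDistrib (Z n) (Z 0) P P) {C : Set β} (hC : MeasurableSet C)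
    {B : Set (ℕ → β)} (hB : MeasurableSet B) :
    P.real (Z 0 ⁻¹' C ∩ (fun ω i ↦ Z (i + 1) ω) ⁻¹' B) =
      P.real (Z 0 ⁻¹' C) * P.real ((fun ω i ↦ Z i ω) ⁻¹' B) := by
  have hmeas' : Measurable fun ω i ↦ Z i ω := measurable_pi_lambda _ hmeas
  have hshift : Measurable fun ω i ↦ Z (i + 1) ω := measurable_pi_lambda _ fun i ↦ hmeas _
  rw [measureReal_def, (hindep.indepFun_head_tail hmeas).meas_inter ⟨C, hC, rfl⟩ ⟨B, hB, rfl⟩,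
    ENNReal.toReal_mul, ← measureReal_def, ← measureReal_def, ← map_measureReal_apply hshift hB,
    ← map_measureReal_apply hmeas' hB,
    hindep.map_comp_eq_map hmeas hid (add_left_injective 1)]

end ProbabilityTheory

lemma ae_eq_or_eq_of_measureReal_add_eq_one {α β : Type*} [MeasurableSpace α]
    [MeasurableSpace β] [MeasurableSingletonClass β] {μ : Measure α} [IsProbabilityMeasure μ]
    {f : α → β} (hf : Measurable f) {a b : β} (hab : a ≠ b)
    (h : μ.real {x | f x = a} + μ.real {x | f x = b} = 1) : ∀ᵐ x ∂μ, f x = a ∨ f x = b := by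
  have hdisj : Disjoint {x | f x = a} {x | f x = b} :=
    Set.disjoint_left.2 fun x ha hb ↦ hab (ha.symm.trans hb)
  have hmeas : MeasurableSet ({x | f x = a} ∪ {x | f x = b}) :=
    (hf (measurableSet_singleton a)).union (hf (measurableSet_singleton b))
  rw [ae_iff, ← measureReal_eq_zero_iff]
  have hcompl : {x | ¬(f x = a ∨ f x = b)} = ({x | f x = a} ∪ {x | f x = b})ᶜ := by
    ext; simp
  rw [hcompl, probReal_compl_eq_one_sub hmeas,
    measureReal_union hdisj (hf (measurableSet_singleton b)), h, sub_self]

theorem gamblersRuin_apply_one {p q : ℝ} (hp : p ≠ 0) (hpq : p + q = 1) {m : ℕ}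
    (hr : (q / p) ^ (m + 1) ≠ 1) {f : ℕ → ℝ}
    (hf : ∀ k < m, f (k + 1) = p * f (k + 2) + q * f k) :
    f 1 = f 0 + (f (m + 1) - f 0) * (q / p - 1) / ((q / p) ^ (m + 1) - 1) := by
  set r := q / p
  have hr₁ : r ≠ 1 := by rintro h; simp [h] at hr
  have hdiff : ∀ k ≤ m, f (k + 1) - f k = r ^ k * (f 1 - f 0) := by
    intro k hk
    induction k with
    | zero => simp
    | succ k ih =>
      have hstep : p * (f (k + 2) - f (k + 1)) = q * (f (k + 1) - f k) := by
        linear_combination -(hf k hk) - f (k + 1) * hpq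
      rw [pow_succ, mul_right_comm, ← ih (by omega),
        ← mul_div_cancel_left₀ (f (k + 2) - f (k + 1)) hp, hstep]
      ring
  have htelescope : f (m + 1) - f 0 = (∑ k ∈ Finset.range (m + 1), r ^ k) * (f 1 - f 0) := by
    rw [← Finset.sum_range_sub, Finset.sum_mul]
    exact Finset.sum_congr rfl fun k hk ↦ hdiff k (by simpa [Nat.lt_succ_iff] using hk)
  rw [geom_sum_eq hr₁] at htelescope
  clear_value r
  have : r - 1 ≠ 0 := sub_ne_zero.2 hr₁
  have : r ^ (m + 1) - 1 ≠ 0 := sub_ne_zero.2 hr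
  field_simp at htelescope ⊢
  linear_combination -htelescope

noncomputable def hitProb {Ω : Type*} [MeasurableSpace Ω] (P : Measure Ω) (Z : ℕ → Ω → ℤ)
    (S : Set ℤ) (t x : ℤ) : ℝ :=
  P.real {ω | ReachesThrough S x t fun i ↦ Z i ω}

section HitProb

variable {Ω : Type*} [MeasurableSpace Ω] {P : Measure Ω} [IsProbabilityMeasure P]
  {Z : ℕ → Ω → ℤ} {S : Set ℤ} {t x : ℤ}

lemma hitProb_of_notMem (hx : x ∉ S) : hitProb P Z S t x = if x = t then 1 else 0 := by
  simp only [hitProb, reachesThrough_iff_of_notMem hx]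
  split_ifs <;> simp [*]

lemma hitProb_eq_of_mem (hmeas : ∀ n, Measurable (Z n)) (hindep : iIndepFun Z P)
    (hid : ∀ n, IdentDistrib (Z n) (Z 0) P P) (hstep : ∀ᵐ ω ∂P, Z 0 ω = 1 ∨ Z 0 ω = -1)
    (hS : MeasurableSet S) (hx : x ∈ S) (ht : t ∉ S) :
    hitProb P Z S t x = P.real {ω | Z 0 ω = 1} * hitProb P Z S t (x + 1) +
      P.real {ω | Z 0 ω = -1} * hitProb P Z S t (x - 1) := by
  set E := {ω | ReachesThrough S x t fun i ↦ Z i ω}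
  have hfirst (c : ℤ) : E ∩ Z 0 ⁻¹' {c} =
      Z 0 ⁻¹' {c} ∩ (fun ω i ↦ Z (i + 1) ω) ⁻¹' {z | ReachesThrough S (x + c) t z} := by
    ext ω
    simp only [E, Set.mem_inter_iff, Set.mem_ofPred_eq, Set.mem_preimage, Set.mem_singleton_iff,
      reachesThrough_iff_of_mem hx ht]
    constructor
    · rintro ⟨h, rfl⟩; exact ⟨rfl, h⟩
    · rintro ⟨rfl, h⟩; exact ⟨h, rfl⟩
  have hsplit : P.real E = P.real (E ∩ Z 0 ⁻¹' {1}) + P.real (E ∩ Z 0 ⁻¹' {-1}) := by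
    have hE : MeasurableSet E := measurable_pi_lambda _ hmeas (measurableSet_reachesThrough hS x t)
    have hdisj : Disjoint (E ∩ Z 0 ⁻¹' {1}) (E ∩ Z 0 ⁻¹' {-1}) :=
      Set.disjoint_left.2 fun ω h₁ h₂ ↦ by grind
    rw [← measureReal_union hdisj (hE.inter (hmeas 0 (measurableSet_singleton _)))]
    refine measureReal_congr (hstep.mono fun ω hω ↦ ?_)
    change (ω ∈ E) = (ω ∈ E ∩ Z 0 ⁻¹' {1} ∪ E ∩ Z 0 ⁻¹' {-1})
    simp only [Set.mem_union, Set.mem_inter_iff, Set.mem_preimage, Set.mem_singleton_iff]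
    grind
  rw [hitProb, hsplit, hfirst, hfirst, hindep.measureReal_head_inter_tail hmeas hid
    (measurableSet_singleton _) (measurableSet_reachesThrough hS _ t),
    hindep.measureReal_head_inter_tail hmeas hid
    (measurableSet_singleton _) (measurableSet_reachesThrough hS _ t), ← sub_eq_add_neg]
  rfl

lemma hitProb_Ioc_one (hmeas : ∀ n, Measurable (Z n)) (hindep : iIndepFun Z P)
    (hid : ∀ n, IdentDistrib (Z n) (Z 0) P P) (hstep : ∀ᵐ ω ∂P, Z 0 ω = 1 ∨ Z 0 ω = -1)
    {p q : ℝ} (hup : P.real {ω | Z 0 ω = 1} = p) (hdown : P.real {ω | Z 0 ω = -1} = q)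
    (hp : p ≠ 0) (hpq : p + q = 1) {m : ℕ} (hr : (q / p) ^ (m + 1) ≠ 1) {t : ℤ}
    (ht : t ∉ Set.Ioc 0 (m : ℤ)) :
    hitProb P Z (Set.Ioc 0 m) t 1 = hitProb P Z (Set.Ioc 0 m) t 0 +
      (hitProb P Z (Set.Ioc 0 m) t (m + 1) - hitProb P Z (Set.Ioc 0 m) t 0) *
        (q / p - 1) / ((q / p) ^ (m + 1) - 1) := by
  have := gamblersRuin_apply_one hp hpq hr (f := fun k : ℕ ↦ hitProb P Z (Set.Ioc 0 m) t k)
    fun k hk ↦ ?_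
  · simpa using this
  · have := hitProb_eq_of_mem hmeas hindep hid hstep measurableSet_Ioc
      (x := ((k + 1 : ℕ) : ℤ)) ⟨by positivity, by omega⟩ ht
    rwa [hup, hdown, show ((k + 1 : ℕ) : ℤ) + 1 = (k + 2 : ℕ) by push_cast; ring,
      show ((k + 1 : ℕ) : ℤ) - 1 = k by push_cast; ring] at this

lemma hitProb_Ioc_one_eq (hmeas : ∀ n, Measurable (Z n)) (hindep : iIndepFun Z P)
    (hid : ∀ n, IdentDistrib (Z n) (Z 0) P P) (hstep : ∀ᵐ ω ∂P, Z 0 ω = 1 ∨ Z 0 ω = -1)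
    {p q : ℝ} (hup : P.real {ω | Z 0 ω = 1} = p) (hdown : P.real {ω | Z 0 ω = -1} = q)
    (hp : p ≠ 0) (hpq : p + q = 1) {m : ℕ} (hr : (q / p) ^ (m + 1) ≠ 1) :
    hitProb P Z (Set.Ioc 0 m) 0 1 = 1 - (q / p - 1) / ((q / p) ^ (m + 1) - 1) ∧
      hitProb P Z (Set.Ioc 0 m) (m + 1) 1 = (q / p - 1) / ((q / p) ^ (m + 1) - 1) := by
  have hruin (t : ℤ) (ht : t ∉ Set.Ioc 0 (m : ℤ)) :=
    hitProb_Ioc_one hmeas hindep hid hstep hup hdown hp hpq hr ht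
  constructor
  · rw [hruin 0 (by simp), hitProb_of_notMem (x := 0) (by simp),
      hitProb_of_notMem (x := m + 1) (by simp), if_pos rfl, if_neg (by omega)]
    ring
  · rw [hruin (m + 1) (by simp), hitProb_of_notMem (x := 0) (by simp),
      hitProb_of_notMem (x := m + 1) (by simp), if_pos rfl, if_neg (by omega)]
    ring

end HitProb

lemma ENNReal.natCast_lt_sInf_iff (Q : ℕ → Prop) (k : ℕ) :
    (k : ℝ≥0∞) < sInf {t : ℝ≥0∞ | ∃ j : ℕ, t = j ∧ Q j} ↔ ∀ j, Q j → k < j := by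
  constructor
  · intro hk j hj
    exact_mod_cast hk.trans_le (sInf_le ⟨j, rfl, hj⟩)
  · intro hk
    refine (ENNReal.lt_add_right (ENNReal.natCast_ne_top k) one_ne_zero).trans_le
      (le_sInf ?_)
    rintro _ ⟨j, rfl, hj⟩
    exact_mod_cast hk j hj

section Lindley

variable {x z : ℕ → ℤ}

lemma lindley_eq_walk (hx : ∀ n, x (n + 1) = max (x n + z n) 0) {k : ℕ}
    (hk : ∀ j ≤ k, 0 ≤ walk (x 0) z j) : x k = walk (x 0) z k := by
  induction k with
  | zero => simp
  | succ k ih =>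
    rw [hx, ih fun j hj ↦ hk j (by omega), ← walk_succ]
    exact max_eq_left (hk _ le_rfl)

/-- The event `ζ ≤ m` for the path `x`, with `k < τ₀` spelled out as: every `j > 0` with
`x j = 0` exceeds `k`. -/
def CycleMaxLE (x : ℕ → ℤ) (m : ℤ) : Prop :=
  ∀ k, (∀ j, 0 < j ∧ x j = 0 → k < j) → x k ≤ m

lemma cycleMaxLE_of_one_eq_zero (hx0 : x 0 = 0) (h1 : x 1 = 0) {m : ℤ} (hm : 0 ≤ m) :
    CycleMaxLE x m := by
  intro k hk
  obtain rfl : k = 0 := by have := hk 1 ⟨one_pos, h1⟩; omega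
  rwa [hx0]

lemma lindley_succ_eq_walk (hx : ∀ n, x (n + 1) = max (x n + z n) 0) (h1 : x 1 = 1) {n : ℕ}
    (hpos : ∀ j ≤ n, 0 ≤ walk 1 (fun i ↦ z (i + 1)) j) {k : ℕ} (hk : k ≤ n) :
    x (k + 1) = walk 1 (fun i ↦ z (i + 1)) k := by
  have hshift := lindley_eq_walk (x := fun i ↦ x (i + 1)) (k := k) fun i ↦ hx (i + 1)
  rw [zero_add, h1] at hshift
  exact hshift fun j hj ↦ hpos j (hj.trans hk)

lemma cycleMaxLE_of_reachesThrough_zero (hx0 : x 0 = 0)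
    (hx : ∀ n, x (n + 1) = max (x n + z n) 0) (h1 : x 1 = 1) {m : ℕ}
    (h : ReachesThrough (Set.Ioc 0 (m : ℤ)) 1 0 fun i ↦ z (i + 1)) : CycleMaxLE x m := by
  obtain ⟨n, hn, hS⟩ := h
  have hwalk (k : ℕ) (hk : k ≤ n) := lindley_succ_eq_walk hx h1 (fun j hj ↦
    (Nat.lt_or_eq_of_le hj).elim (fun h ↦ (hS j h).1.le) fun h ↦ by rw [h, hn]) hk
  intro k hk
  have hkn : k < n + 1 := hk (n + 1) ⟨n.succ_pos, (hwalk n le_rfl).trans hn⟩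
  rcases k with _ | k
  · simp [hx0]
  · rw [hwalk k (by omega)]
    exact (hS k (by omega)).2

lemma not_cycleMaxLE_of_reachesThrough_succ
    (hx : ∀ n, x (n + 1) = max (x n + z n) 0) (h1 : x 1 = 1) {m : ℕ}
    (h : ReachesThrough (Set.Ioc 0 (m : ℤ)) 1 (m + 1) fun i ↦ z (i + 1)) :
    ¬ CycleMaxLE x m := by
  obtain ⟨n, hn, hS⟩ := h
  have hwalk (k : ℕ) (hk : k ≤ n) := lindley_succ_eq_walk hx h1 (fun j hj ↦
    (Nat.lt_or_eq_of_le hj).elim (fun h ↦ (hS j h).1.le) fun h ↦ by rw [h, hn]; omega) hk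
  intro hmax
  have hle := hmax (n + 1) fun j ⟨hj, hj0⟩ ↦ by
    obtain ⟨i, rfl⟩ : ∃ i, j = i + 1 := ⟨j - 1, by omega⟩
    by_contra! hin
    rw [hwalk i (by omega)] at hj0
    rcases Nat.lt_or_eq_of_le (show i ≤ n by omega) with hi | rfl
    · exact (hS i hi).1.ne' hj0
    · omega
  rw [hwalk n le_rfl, hn] at hle
  omega

end Lindley

section LindleyProcess

variable {Ω : Type*} [MeasurableSpace Ω] {P : Measure Ω} [IsProbabilityMeasure P]
  {Z X : ℕ → Ω → ℤ}

lemma le_measureReal_cycleMaxLE (hmeas : ∀ n, Measurable (Z n)) (hindep : iIndepFun Z P)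
    (hid : ∀ n, IdentDistrib (Z n) (Z 0) P P) (hX0 : ∀ ω, X 0 ω = 0)
    (hXrec : ∀ n ω, X (n + 1) ω = max (X n ω + Z n ω) 0) (m : ℕ) :
    P.real {ω | Z 0 ω = -1} + P.real {ω | Z 0 ω = 1} * hitProb P Z (Set.Ioc 0 m) 0 1 ≤
      P.real {ω | CycleMaxLE (X · ω) m} := by
  set B := Z 0 ⁻¹' {1} ∩ (fun ω i ↦ Z (i + 1) ω) ⁻¹'
    {z | ReachesThrough (Set.Ioc 0 (m : ℤ)) 1 0 z}
  have hsub : Z 0 ⁻¹' {-1} ∪ B ⊆ {ω | CycleMaxLE (X · ω) m} := by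
    rintro ω (hdown | ⟨hup, hreach⟩)
    · refine cycleMaxLE_of_one_eq_zero (hX0 ω) ?_ m.cast_nonneg
      rw [hXrec, hX0, show Z 0 ω = -1 from hdown]
      rfl
    · refine cycleMaxLE_of_reachesThrough_zero (z := (Z · ω)) (hX0 ω) (hXrec · ω) ?_ hreach
      rw [hXrec, hX0, show Z 0 ω = 1 from hup]
      rfl
  have hdisj : Disjoint (Z 0 ⁻¹' {-1}) B := Set.disjoint_left.2 fun ω h₁ h₂ ↦ by simp_all [B]
  calc _ = P.real (Z 0 ⁻¹' {-1}) + P.real B := by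
        rw [hindep.measureReal_head_inter_tail hmeas hid (measurableSet_singleton 1)
          (measurableSet_reachesThrough measurableSet_Ioc 1 0)]
        rfl
    _ = P.real (Z 0 ⁻¹' {-1} ∪ B) :=
        (measureReal_union hdisj ((hmeas 0 (measurableSet_singleton 1)).inter
          (measurable_pi_lambda _ (fun i ↦ hmeas (i + 1))
            (measurableSet_reachesThrough measurableSet_Ioc 1 0)))).symm
    _ ≤ _ := measureReal_mono hsub

lemma measureReal_cycleMaxLE_add_le_one (hmeas : ∀ n, Measurable (Z n))
    (hindep : iIndepFun Z P) (hid : ∀ n, IdentDistrib (Z n) (Z 0) P P)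
    (hX0 : ∀ ω, X 0 ω = 0) (hXrec : ∀ n ω, X (n + 1) ω = max (X n ω + Z n ω) 0) (m : ℕ) :
    P.real {ω | CycleMaxLE (X · ω) m} +
      P.real {ω | Z 0 ω = 1} * hitProb P Z (Set.Ioc 0 m) (m + 1) 1 ≤ 1 := by
  set B := Z 0 ⁻¹' {1} ∩ (fun ω i ↦ Z (i + 1) ω) ⁻¹'
    {z | ReachesThrough (Set.Ioc 0 (m : ℤ)) 1 (m + 1) z}
  have hdisj : Disjoint {ω | CycleMaxLE (X · ω) m} B := by
    refine Set.disjoint_left.2 fun ω hmax ⟨hup, hreach⟩ ↦ ?_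
    refine not_cycleMaxLE_of_reachesThrough_succ (z := (Z · ω)) (hXrec · ω) ?_ hreach hmax
    rw [hXrec, hX0, show Z 0 ω = 1 from hup]
    rfl
  calc _ = P.real {ω | CycleMaxLE (X · ω) m} + P.real B := by
        rw [hindep.measureReal_head_inter_tail hmeas hid (measurableSet_singleton 1)
          (measurableSet_reachesThrough measurableSet_Ioc 1 _)]
        rfl
    _ = P.real ({ω | CycleMaxLE (X · ω) m} ∪ B) :=
        (measureReal_union hdisj ((hmeas 0 (measurableSet_singleton 1)).inter
          (measurable_pi_lambda _ (fun i ↦ hmeas (i + 1))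
            (measurableSet_reachesThrough measurableSet_Ioc 1 _)))).symm
    _ ≤ 1 := measureReal_le_one

lemma measureReal_cycleMaxLE_eq (hmeas : ∀ n, Measurable (Z n)) (hindep : iIndepFun Z P)
    (hid : ∀ n, IdentDistrib (Z n) (Z 0) P P) (hX0 : ∀ ω, X 0 ω = 0)
    (hXrec : ∀ n ω, X (n + 1) ω = max (X n ω + Z n ω) 0) (m : ℕ)
    (hpq : P.real {ω | Z 0 ω = 1} + P.real {ω | Z 0 ω = -1} = 1)
    (hsum : hitProb P Z (Set.Ioc 0 m) 0 1 + hitProb P Z (Set.Ioc 0 m) (m + 1) 1 = 1) :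
    P.real {ω | CycleMaxLE (X · ω) m} =
      P.real {ω | Z 0 ω = -1} + P.real {ω | Z 0 ω = 1} * hitProb P Z (Set.Ioc 0 m) 0 1 := by
  have hlow := le_measureReal_cycleMaxLE hmeas hindep hid hX0 hXrec m
  have hhigh := measureReal_cycleMaxLE_add_le_one hmeas hindep hid hX0 hXrec m
  rw [eq_sub_of_add_eq' hsum] at hhigh
  apply le_antisymm <;> linarith

end LindleyProcess

theorem lindley_cycle_max_distribution_general
    {Ω : Type*} [MeasurableSpace Ω] (P : Measure Ω) [IsProbabilityMeasure P]
    (p q : ℝ) (hp : p ∈ Set.Ioo (0 : ℝ) (1 / 2)) (hq : q = 1 - p)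
    (Z : ℕ → Ω → ℤ)
    (hmeas : ∀ n, Measurable (Z n))
    (hindep : iIndepFun Z P)
    (hid : ∀ n, IdentDistrib (Z n) (Z 0) P P)
    (hup : P {ω | Z 0 ω = 1} = ENNReal.ofReal p)
    (hdown : P {ω | Z 0 ω = -1} = ENNReal.ofReal q)
    (X : ℕ → Ω → ℤ)
    (hX0 : ∀ ω, X 0 ω = 0)
    (hXrec : ∀ n ω, X (n + 1) ω = max (X n ω + Z n ω) 0)
    (τ₀ : Ω → ℝ≥0∞)
    (hτ₀ : ∀ ω, τ₀ ω = sInf {t : ℝ≥0∞ | ∃ k : ℕ, t = k ∧ 0 < k ∧ X k ω = 0})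
    (m : ℕ) :
    P {ω | ∀ k : ℕ, (k : ℝ≥0∞) < τ₀ ω → X k ω ≤ (m : ℤ)} =
      ENNReal.ofReal (q + p * ((q / p) ^ (m + 1) - q / p) / ((q / p) ^ (m + 1) - 1)) := by
  obtain ⟨hp₀, hp₂⟩ := hp
  have hpq : p + q = 1 := by rw [hq]; ring
  have hup' : P.real {ω | Z 0 ω = 1} = p := by
    rw [measureReal_def, hup, ENNReal.toReal_ofReal hp₀.le]
  have hdown' : P.real {ω | Z 0 ω = -1} = q := by
    rw [measureReal_def, hdown, ENNReal.toReal_ofReal (by linarith)]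
  have hstep : ∀ᵐ ω ∂P, Z 0 ω = 1 ∨ Z 0 ω = -1 :=
    ae_eq_or_eq_of_measureReal_add_eq_one (hmeas 0) (by decide) (by rw [hup', hdown', hpq])
  have hr : 1 < (q / p) ^ (m + 1) :=
    one_lt_pow₀ ((one_lt_div hp₀).2 (by linarith)) m.succ_ne_zero
  obtain ⟨hret, hesc⟩ :=
    hitProb_Ioc_one_eq hmeas hindep hid hstep hup' hdown' hp₀.ne' hpq hr.ne'
  have hset : {ω | ∀ k : ℕ, (k : ℝ≥0∞) < τ₀ ω → X k ω ≤ (m : ℤ)} =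
      {ω | CycleMaxLE (X · ω) m} := by
    ext ω
    simp only [hτ₀]
    exact forall_congr' fun k ↦ imp_congr (ENNReal.natCast_lt_sInf_iff _ k) Iff.rfl
  rw [hset, ← ofReal_measureReal, measureReal_cycleMaxLE_eq hmeas hindep hid hX0 hXrec m
    (by rw [hup', hdown', hpq]) (by rw [hret, hesc]; ring), hup', hdown', hret]
  congr 1
  field_simp [(by linarith : (q / p) ^ (m + 1) - 1 ≠ 0)]
  ring

/-- For the Lindley process driven by i.i.d. `±1` steps with
up-probability `p < 1/2`, the distribution function of the maximum `ζ` of the first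
regeneration cycle satisfies, for every integer `m ≥ 1`,
`P(ζ ≤ m) = q + p ((q/p)^{m+1} - (q/p)) / ((q/p)^{m+1} - 1)`.
The event `{ζ ≤ m}` is expressed as: every value of the process before the first return
time `τ₀` is at most `m`. -/
theorem lindley_cycle_max_distribution
    {Ω : Type*} [MeasurableSpace Ω] (P : Measure Ω) [IsProbabilityMeasure P]
    (p q : ℝ) (hp : p ∈ Set.Ioo (0 : ℝ) (1 / 2)) (hq : q = 1 - p)
    (Z : ℕ → Ω → ℤ)
    (hmeas : ∀ n, Measurable (Z n))
    (hindep : iIndepFun Z P)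
    (hid : ∀ n, IdentDistrib (Z n) (Z 0) P P)
    (hup : P {ω | Z 0 ω = 1} = ENNReal.ofReal p)
    (hdown : P {ω | Z 0 ω = -1} = ENNReal.ofReal q)
    (X : ℕ → Ω → ℤ)
    (hX0 : ∀ ω, X 0 ω = 0)
    (hXrec : ∀ n ω, X (n + 1) ω = max (X n ω + Z n ω) 0)
    (τ₀ : Ω → ℝ≥0∞)
    (hτ₀ : ∀ ω, τ₀ ω = sInf {t : ℝ≥0∞ | ∃ k : ℕ, t = k ∧ 0 < k ∧ X k ω = 0})
    (m : ℕ) (hm : 1 ≤ m) :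
    P {ω | ∀ k : ℕ, (k : ℝ≥0∞) < τ₀ ω → X k ω ≤ (m : ℤ)} =
      ENNReal.ofReal (q + p * ((q / p) ^ (m + 1) - q / p) / ((q / p) ^ (m + 1) - 1)) :=
  lindley_cycle_max_distribution_general P p q hp hq Z hmeas hindep hid hup hdown X hX0 hXrec τ₀ hτ₀
    m
end

section
/- Let Z_0, Z_1, Z_2, … be i.i.d. real random variables with distribution function F and E[Z_0] < 0, where F is long-tailed, i.e., (1 − F(x+y))/(1 − F(x)) → 1 as x → ∞ for every y > 0 (in particular 1 − F(x) > 0 for all x). Define the Lindley process X_0 := 0, X_n := max{X_{n−1} + Z_{n−1}, 0}, let τ_0 := inf{k > 0 : X_k = 0}, and assume μ := E[τ_0] < ∞. Let ζ := max{X_k : 0 ≤ k < τ_0} and, for i ≥ 1, let ζ^{(i+1)} denote the (i+1)-th largest value among X_0, …, X_{τ_0−1} (set to −∞ if τ_0 ≤ i). Assume further that P(ζ > x)/(μ(1 − F(x))) → 1 as x → ∞. Then for every i ∈ ℕ_+: lim_{x→∞} P(ζ^{(i+1)} ≤ x | ζ > x) = 0; in particular β_i(x) := P(ζ^{(i+1)}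 ≤ x < ζ^{(i)} | ζ > x) → 0 as x → ∞. -/
open MeasureTheory ProbabilityTheory Filter
open scoped ENNReal

/-- The set of exceedance times of the level `x` during the first regeneration cycle
(of length `τ₀`) of the process `X`. -/
def exceedSet {Ω : Type*} (τ₀ : Ω → ℝ≥0∞) (X : ℕ → Ω → ℝ) (x : ℝ) (ω : Ω) : Set ℕ :=
  {k : ℕ | (k : ℝ≥0∞) < τ₀ ω ∧ x < X k ω}

private lemma aux_cancel (A B c d : ℝ) (hc : c ≠ 0) (hd : d ≠ 0) :
    A / c * (c / d) * (d / B) = A / B := by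
  rcases eq_or_ne B 0 with rfl | hB
  · simp
  · field_simp

/-- For the Lindley process with i.i.d. long-tailed steps of negative
mean, finite mean cycle length `μ`, and cycle-maximum tail asymptotics
`P(ζ > x) ∼ μ (1 - F(x))`, one has `P(ζ⁽ⁱ⁺¹⁾ ≤ x | ζ > x) → 0` as `x → ∞` for every
`i ≥ 1`; in particular `β_i(x) := P(ζ⁽ⁱ⁺¹⁾ ≤ x < ζ⁽ⁱ⁾ | ζ > x) → 0`.
Here `{ζ⁽ⁱ⁺¹⁾ ≤ x}` is the event that at most `i` indices `k < τ₀` satisfy `X_k > x`,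
`{ζ⁽ⁱ⁺¹⁾ ≤ x < ζ⁽ⁱ⁾}` the event that exactly `i` such indices exist, and `{ζ > x}` the
event that at least one exists. -/
theorem lindley_long_tailed_beta_zero
    {Ω : Type*} [MeasurableSpace Ω] (P : Measure Ω) [IsProbabilityMeasure P]
    (Z : ℕ → Ω → ℝ)
    (hmeas : ∀ n, Measurable (Z n))
    (hindep : iIndepFun Z P)
    (hid : ∀ n, IdentDistrib (Z n) (Z 0) P P)
    (hint : Integrable (Z 0) P) (hneg : ∫ ω, Z 0 ω ∂P < 0)
    (F : ℝ → ℝ) (hF : ∀ x, F x = (P {ω | Z 0 ω ≤ x}).toReal)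
    (hFlt : ∀ x, F x < 1)
    (hlong : ∀ y : ℝ, 0 < y →
      Tendsto (fun x => (1 - F (x + y)) / (1 - F x)) atTop (nhds 1))
    (X : ℕ → Ω → ℝ)
    (hX0 : ∀ ω, X 0 ω = 0)
    (hXrec : ∀ n ω, X (n + 1) ω = max (X n ω + Z n ω) 0)
    (τ₀ : Ω → ℝ≥0∞)
    (hτ₀ : ∀ ω, τ₀ ω = sInf {t : ℝ≥0∞ | ∃ k : ℕ, t = k ∧ 0 < k ∧ X k ω = 0})
    (hμfin : ∫⁻ ω, τ₀ ω ∂P ≠ ⊤)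
    (μ : ℝ) (hμ : μ = (∫⁻ ω, τ₀ ω ∂P).toReal)
    (htail : Tendsto
      (fun x : ℝ => (P {ω | (exceedSet τ₀ X x ω).Nonempty}).toReal / (μ * (1 - F x)))
      atTop (nhds 1)) :
    ∀ i : ℕ, 1 ≤ i →
      Tendsto
        (fun x : ℝ =>
          (P {ω | ((exceedSet τ₀ X x ω).Finite ∧ (exceedSet τ₀ X x ω).ncard ≤ i) ∧
              (exceedSet τ₀ X x ω).Nonempty}).toReal /
            (P {ω | (exceedSet τ₀ X x ω).Nonempty}).toReal)
        atTop (nhds 0) ∧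
      Tendsto
        (fun x : ℝ =>
          (P {ω | (exceedSet τ₀ X x ω).Finite ∧ (exceedSet τ₀ X x ω).ncard = i}).toReal /
            (P {ω | (exceedSet τ₀ X x ω).Nonempty}).toReal)
        atTop (nhds 0) := by
  classical
  intro i hi
  have hlt : ∀ (ω : Ω) (k : ℕ), ((k : ℝ≥0∞) < τ₀ ω ↔ ∀ m : ℕ, 0 < m → m ≤ k → X m ω ≠ 0) := by
    intro ω k
    rw [hτ₀]
    constructor
    · intro h m hm hmk hXm
      have hmem : ((m : ℕ) : ℝ≥0∞) ∈ {t : ℝ≥0∞ | ∃ k : ℕ, t = k ∧ 0 < k ∧ X k ω = 0} :=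
        ⟨m, rfl, hm, hXm⟩
      have h1 := sInf_le hmem
      have hcast : ((m : ℝ≥0∞)) ≤ (k : ℝ≥0∞) := by exact_mod_cast hmk
      exact absurd (lt_of_lt_of_le h (le_trans h1 hcast)) (lt_irrefl _)
    · intro h
      have h1 : ((k : ℝ≥0∞) + 1) ≤ sInf {t : ℝ≥0∞ | ∃ k : ℕ, t = k ∧ 0 < k ∧ X k ω = 0} := by
        apply le_sInf
        rintro t ⟨m, rfl, hm, hXm⟩
        have hkm : k < m := by
          by_contra hc
          exact h m hm (le_of_not_gt hc) hXm
        have : ((k+1 : ℕ) : ℝ≥0∞) ≤ (m : ℝ≥0∞) := by exact_mod_cast hkm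
        simpa using this
      exact lt_of_lt_of_le (ENNReal.lt_add_right (ENNReal.natCast_ne_top k) one_ne_zero) h1
  have hmem : ∀ (x : ℝ) (ω : Ω) (k : ℕ), k ∈ exceedSet τ₀ X x ω ↔
      ((∀ m : ℕ, 0 < m → m ≤ k → X m ω ≠ 0) ∧ x < X k ω) := by
    intro x ω k
    show ((k : ℝ≥0∞) < τ₀ ω ∧ x < X k ω) ↔ _
    rw [hlt]
  have hZMa : ∀ n : ℕ, Measurable[MeasurableSpace.comap (Z n) inferInstance] (Z n) :=
    fun n => measurable_iff_comap_le.2 le_rfl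
  have hZM : ∀ (t n : ℕ), n < t →
      Measurable[⨆ n ∈ Set.Iio t, MeasurableSpace.comap (Z n) inferInstance] (Z n) := by
    intro t n hn
    exact (hZMa n).mono
      (le_iSup₂ (f := fun n (_ : n ∈ Set.Iio t) => MeasurableSpace.comap (Z n) inferInstance) n hn)
      le_rfl
  have hZM' : ∀ (t n : ℕ), t ≤ n →
      Measurable[⨆ n ∈ Set.Ici t, MeasurableSpace.comap (Z n) inferInstance] (Z n) := by
    intro t n hn
    exact (hZMa n).mono
      (le_iSup₂ (f := fun n (_ : n ∈ Set.Ici t) => MeasurableSpace.comap (Z n) inferInstance) n hn)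
      le_rfl
  have hXM : ∀ (t m : ℕ), m ≤ t →
      Measurable[⨆ n ∈ Set.Iio t, MeasurableSpace.comap (Z n) inferInstance] (X m) := by
    intro t m
    induction m with
    | zero =>
      intro _
      have h0 : X 0 = fun _ => (0:ℝ) := funext hX0
      rw [h0]; exact measurable_const
    | succ m ih =>
      intro hm
      have h1 : X (m+1) = fun ω => max (X m ω + Z m ω) 0 := funext (hXrec m)
      rw [h1]
      exact ((ih (le_trans (Nat.le_succ m) hm)).add
        (hZM t m (lt_of_lt_of_le (Nat.lt_succ_self m) hm))).max measurable_const
  have hMle : ∀ t : ℕ, (⨆ n ∈ Set.Iio t, MeasurableSpace.comap (Z n) inferInstance)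
      ≤ ‹MeasurableSpace Ω› := fun t => iSup₂_le fun n _ => (hmeas n).comap_le
  have hM'le : ∀ t : ℕ, (⨆ n ∈ Set.Ici t, MeasurableSpace.comap (Z n) inferInstance)
      ≤ ‹MeasurableSpace Ω› := fun t => iSup₂_le fun n _ => (hmeas n).comap_le
  have hmemM : ∀ (x : ℝ) (t k : ℕ), k ≤ t →
      MeasurableSet[⨆ n ∈ Set.Iio t, MeasurableSpace.comap (Z n) inferInstance]
        {ω | k ∈ exceedSet τ₀ X x ω} := by
    intro x t k hk
    have hset : {ω | k ∈ exceedSet τ₀ X x ω} =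
        (⋂ m ∈ Set.Icc 1 k, {ω | X m ω ≠ 0}) ∩ {ω | x < X k ω} := by
      ext ω
      simp only [Set.mem_setOf_eq, hmem, Set.mem_inter_iff, Set.mem_iInter, Set.mem_Icc]
      constructor
      · rintro ⟨h1, h2⟩; exact ⟨fun m hm => h1 m hm.1 hm.2, h2⟩
      · rintro ⟨h1, h2⟩; exact ⟨fun m hm1 hm2 => h1 m ⟨hm1, hm2⟩, h2⟩
    rw [hset]
    refine MeasurableSet.inter ?_ ?_
    · refine MeasurableSet.biInter (Set.to_countable _) (fun m hm => ?_)
      have h2 := hXM t m (le_trans hm.2 hk)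
      exact (h2 (measurableSet_singleton 0)).compl
    · exact hXM t k hk measurableSet_Ioi
  have hmemMeas : ∀ (x : ℝ) (k : ℕ), MeasurableSet {ω | k ∈ exceedSet τ₀ X x ω} :=
    fun x k => hMle k _ (hmemM x k k le_rfl)
  have measN : ∀ x : ℝ, MeasurableSet {ω | (exceedSet τ₀ X x ω).Nonempty} := by
    intro x
    have : {ω | (exceedSet τ₀ X x ω).Nonempty} = ⋃ k : ℕ, {ω | k ∈ exceedSet τ₀ X x ω} := by
      ext ω; simp [Set.Nonempty, Set.mem_iUnion]
    rw [this]
    exact MeasurableSet.iUnion (fun k => hmemMeas x k)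
  have measE : ∀ (x : ℝ) (j : ℕ),
      MeasurableSet {ω | ∃ u : Finset ℕ, u.card = j ∧ ↑u ⊆ exceedSet τ₀ X x ω} := by
    intro x j
    have : {ω | ∃ u : Finset ℕ, u.card = j ∧ ↑u ⊆ exceedSet τ₀ X x ω}
        = ⋃ (u : Finset ℕ) (_ : u.card = j), ⋂ k ∈ u, {ω | k ∈ exceedSet τ₀ X x ω} := by
      ext ω
      simp only [Set.mem_setOf_eq, Set.mem_iUnion, Set.mem_iInter]
      constructor
      · rintro ⟨u, hc, hsub⟩; exact ⟨u, hc, fun k hk => hsub hk⟩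
      · rintro ⟨u, hc, h⟩; exact ⟨u, hc, fun k hk => h k hk⟩
    rw [this]
    exact MeasurableSet.iUnion fun u => MeasurableSet.iUnion fun _ =>
      Finset.measurableSet_biInter u fun k _ => hmemMeas x k
  have key : ∀ (x y : ℝ), 0 ≤ x → 0 < y →
      (P (Z 0 ⁻¹' Set.Ici (-y)))^i * P {ω | (exceedSet τ₀ X (x + i*y) ω).Nonempty}
        ≤ P {ω | ∃ u : Finset ℕ, u.card = i+1 ∧ ↑u ⊆ exceedSet τ₀ X x ω} := by
    intro x y hx hy
    set x' : ℝ := x + i * y with hx'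
    set B : ℕ → Set Ω := fun t =>
      {ω | t ∈ exceedSet τ₀ X x' ω ∧ ∀ t' < t, t' ∉ exceedSet τ₀ X x' ω} with hBdef
    set C : ℕ → Set Ω := fun t => ⋂ n ∈ Finset.Ico t (t+i), Z n ⁻¹' Set.Ici (-y) with hCdef
    -- measurability
    have hBM : ∀ t, MeasurableSet[⨆ n ∈ Set.Iio t, MeasurableSpace.comap (Z n) inferInstance]
        (B t) := by
      intro t
      have hBeq : B t = {ω | t ∈ exceedSet τ₀ X x' ω} ∩
          ⋂ t' ∈ Set.Iio t, {ω | t' ∈ exceedSet τ₀ X x' ω}ᶜ := by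
        ext ω
        simp only [hBdef, Set.mem_setOf_eq, Set.mem_inter_iff, Set.mem_iInter, Set.mem_Iio,
          Set.mem_compl_iff]
      rw [hBeq]
      exact (hmemM x' t t le_rfl).inter (MeasurableSet.biInter (Set.to_countable _)
        fun t' ht' => (hmemM x' t t' (le_of_lt ht')).compl)
    have hBmeas : ∀ t, MeasurableSet (B t) := fun t => hMle t _ (hBM t)
    have hCM : ∀ t, MeasurableSet[⨆ n ∈ Set.Ici t, MeasurableSpace.comap (Z n) inferInstance]
        (C t) := by
      intro t
      refine Finset.measurableSet_biInter _ (fun n hn => ?_)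
      exact hZM' t n (Finset.mem_Ico.1 hn).1 measurableSet_Ici
    have hCmeas : ∀ t, MeasurableSet (C t) := fun t => hM'le t _ (hCM t)
    -- independence
    have hBC : ∀ t, P (B t ∩ C t) = P (B t) * P (C t) := by
      intro t
      have h := indep_iSup_of_disjoint (fun n => (hmeas n).comap_le) hindep.iIndep
        (Set.Iio_disjoint_Ici (le_refl (t : ℕ)))
      exact (Indep_iff _ _ _).1 h (B t) (C t) (hBM t) (hCM t)
    have hPC : ∀ t, P (C t) = (P (Z 0 ⁻¹' Set.Ici (-y)))^i := by
      intro t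
      have h1 := hindep.meas_biInter (S := Finset.Ico t (t+i))
        (s := fun n => Z n ⁻¹' Set.Ici (-y))
        (fun n _ => ⟨Set.Ici (-y), measurableSet_Ici, rfl⟩)
      rw [hCdef]
      rw [h1, Finset.prod_congr rfl
        (fun n _ => ((hid n).measure_mem_eq measurableSet_Ici :
          P (Z n ⁻¹' Set.Ici (-y)) = P (Z 0 ⁻¹' Set.Ici (-y)))),
        Finset.prod_const, Nat.card_Ico]
      congr 1
      omega
    -- disjointness
    have hBd : ∀ s t : ℕ, s < t → Disjoint (B s) (B t) := by
      intro s t hst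
      rw [Set.disjoint_left]
      rintro ω ⟨hs, _⟩ ⟨_, ht2⟩
      exact ht2 s hst hs
    have hBdisj : Pairwise (Function.onFun Disjoint B) := fun s t hst =>
      (lt_or_gt_of_ne hst).elim (hBd s t) (fun h => (hBd t s h).symm)
    have hBCdisj : Pairwise (Function.onFun Disjoint (fun t => B t ∩ C t)) := fun s t hst =>
      ((hBdisj hst).mono Set.inter_subset_left Set.inter_subset_left)
    -- union of B's
    have hBunion : (⋃ t, B t) = {ω | (exceedSet τ₀ X x' ω).Nonempty} := by
      ext ω
      simp only [Set.mem_iUnion, Set.mem_setOf_eq]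
      constructor
      · rintro ⟨t, ht, _⟩; exact ⟨t, ht⟩
      · rintro ⟨k, hk⟩
        have hex : ∃ t, t ∈ exceedSet τ₀ X x' ω := ⟨k, hk⟩
        exact ⟨Nat.find hex, Nat.find_spec hex, fun t' ht' => Nat.find_min hex ht'⟩
    -- inclusion
    have hincl : ∀ t, B t ∩ C t ⊆
        {ω | ∃ u : Finset ℕ, u.card = i+1 ∧ ↑u ⊆ exceedSet τ₀ X x ω} := by
      rintro t ω ⟨⟨htmem, _⟩, hc⟩
      obtain ⟨hτ, hXt⟩ := (hmem x' ω t).1 htmem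
      have hCz : ∀ j, j < i → -y ≤ Z (t+j) ω := by
        intro j hj
        have h1 : ω ∈ Z (t+j) ⁻¹' Set.Ici (-y) := by
          rw [hCdef] at hc
          simp only [Set.mem_iInter] at hc
          exact hc (t+j) (Finset.mem_Ico.2 ⟨Nat.le_add_right _ _, by omega⟩)
        exact h1
      have hstep : ∀ j, j ≤ i → x + ((i:ℝ) - j) * y < X (t+j) ω := by
        intro j
        induction j with
        | zero =>
          intro _
          simpa [hx'] using hXt
        | succ j ih =>
          intro hj
          have h1 := ih (by omega)
          have h2 : -y ≤ Z (t+j) ω := hCz j (by omega)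
          have h3 : X (t+(j+1)) ω = max (X (t+j) ω + Z (t+j) ω) 0 := hXrec (t+j) ω
          calc x + ((i:ℝ) - (j+1:ℕ)) * y = (x + ((i:ℝ) - (j:ℕ)) * y) + (-y) := by
                push_cast; ring
            _ < X (t+j) ω + Z (t+j) ω := add_lt_add_of_lt_of_le h1 h2
            _ ≤ max (X (t+j) ω + Z (t+j) ω) 0 := le_max_left _ _
            _ = X (t+(j+1)) ω := h3.symm
      have hgtx : ∀ j, j ≤ i → x < X (t+j) ω := by
        intro j hj
        have h0 : (0:ℝ) ≤ ((i:ℝ) - (j:ℕ)) * y := by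
          apply mul_nonneg _ hy.le
          have : (j:ℝ) ≤ (i:ℝ) := by exact_mod_cast hj
          linarith
        have := hstep j hj
        linarith
      have hmemx : ∀ j, j ≤ i → (t+j) ∈ exceedSet τ₀ X x ω := by
        intro j hj
        rw [hmem]
        refine ⟨fun m hm hmtj => ?_, hgtx j hj⟩
        by_cases hmt : m ≤ t
        · exact hτ m hm hmt
        · push_neg at hmt
          have hmeq : m = t + (m - t) := by omega
          rw [hmeq]
          have h := hgtx (m - t) (by omega)
          have hx0 : 0 < X (t + (m-t)) ω := lt_of_le_of_lt hx h
          exact ne_of_gt hx0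
      refine ⟨Finset.image (fun j => t + j) (Finset.range (i+1)), ?_, ?_⟩
      · rw [Finset.card_image_of_injective _ (add_right_injective t), Finset.card_range]
      · intro k hk
        simp only [Finset.coe_image, Set.mem_image, Finset.mem_coe, Finset.mem_range] at hk
        obtain ⟨j, hj, rfl⟩ := hk
        exact hmemx j (by omega)
    -- the chain
    calc (P (Z 0 ⁻¹' Set.Ici (-y)))^i * P {ω | (exceedSet τ₀ X x' ω).Nonempty}
        = (P (Z 0 ⁻¹' Set.Ici (-y)))^i * P (⋃ t, B t) := by rw [hBunion]
      _ = (P (Z 0 ⁻¹' Set.Ici (-y)))^i * ∑' t, P (B t) := by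
          rw [measure_iUnion hBdisj hBmeas]
      _ = ∑' t, P (B t) * (P (Z 0 ⁻¹' Set.Ici (-y)))^i := by
          rw [ENNReal.tsum_mul_right, mul_comm]
      _ = ∑' t, P (B t ∩ C t) := by
          refine tsum_congr (fun t => ?_)
          rw [hBC t, hPC t]
      _ = P (⋃ t, B t ∩ C t) := (measure_iUnion hBCdisj
          (fun t => (hBmeas t).inter (hCmeas t))).symm
      _ ≤ P {ω | ∃ u : Finset ℕ, u.card = i+1 ∧ ↑u ⊆ exceedSet τ₀ X x ω} :=
          measure_mono (Set.iUnion_subset hincl)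
  -- the set identity
  have hsplit : ∀ x : ℝ,
      {ω | ((exceedSet τ₀ X x ω).Finite ∧ (exceedSet τ₀ X x ω).ncard ≤ i) ∧
          (exceedSet τ₀ X x ω).Nonempty}
      = {ω | (exceedSet τ₀ X x ω).Nonempty} \
        {ω | ∃ u : Finset ℕ, u.card = i+1 ∧ ↑u ⊆ exceedSet τ₀ X x ω} := by
    intro x
    ext ω
    simp only [Set.mem_setOf_eq, Set.mem_diff]
    constructor
    · rintro ⟨⟨hfin, hcard⟩, hne⟩
      refine ⟨hne, ?_⟩
      rintro ⟨u, hc, hsub⟩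
      have h1 : u.card ≤ (exceedSet τ₀ X x ω).ncard := by
        rw [← Set.ncard_coe_finset]
        exact Set.ncard_le_ncard hsub hfin
      omega
    · rintro ⟨hne, hnot⟩
      by_cases hfin : (exceedSet τ₀ X x ω).Finite
      · refine ⟨⟨hfin, ?_⟩, hne⟩
        by_contra hcc
        push_neg at hcc
        have hle : i + 1 ≤ hfin.toFinset.card := by
          rw [← Set.ncard_eq_toFinset_card _ hfin]
          omega
        obtain ⟨u, hu1, hu2⟩ := Finset.exists_subset_card_eq hle
        refine hnot ⟨u, hu2, ?_⟩
        refine subset_trans ?_ hfin.coe_toFinset.subset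
        exact_mod_cast hu1
      · obtain ⟨u, hsub, hc⟩ := Set.Infinite.exists_subset_card_eq hfin (i+1)
        exact absurd ⟨u, hc, hsub⟩ hnot
  have hEsubN : ∀ x : ℝ,
      {ω | ∃ u : Finset ℕ, u.card = i+1 ∧ ↑u ⊆ exceedSet τ₀ X x ω}
        ⊆ {ω | (exceedSet τ₀ X x ω).Nonempty} := by
    rintro x ω ⟨u, hc, hsub⟩
    obtain ⟨k, hk⟩ := Finset.card_pos.1 (by omega : 0 < u.card)
    exact ⟨k, hsub hk⟩
  -- μ ≥ 1
  have hμ1 : (1:ℝ) ≤ μ := by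
    have h1 : (1:ℝ≥0∞) ≤ ∫⁻ ω, τ₀ ω ∂P := by
      have h2 : ∫⁻ (_ : Ω), (1:ℝ≥0∞) ∂P = 1 := by simp
      rw [← h2]
      refine lintegral_mono (fun ω => ?_)
      rw [hτ₀]
      refine le_sInf ?_
      rintro t ⟨m, rfl, hm, _⟩
      exact_mod_cast hm
    rw [hμ]
    calc (1:ℝ) = (1:ℝ≥0∞).toReal := by simp
      _ ≤ _ := ENNReal.toReal_mono hμfin h1
  have hμ0 : 0 < μ := lt_of_lt_of_le one_pos hμ1
  have hFpos : ∀ x : ℝ, 0 < 1 - F x := fun x => sub_pos.2 (hFlt x)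
  -- eventual positivity of P(N x)
  have haev : ∀ᶠ x in atTop, 0 < (P {ω | (exceedSet τ₀ X x ω).Nonempty}).toReal := by
    have h := htail.eventually (eventually_gt_nhds (by norm_num : (0:ℝ) < 1))
    filter_upwards [h] with x hx
    rcases lt_or_eq_of_le (ENNReal.toReal_nonneg :
        (0:ℝ) ≤ (P {ω | (exceedSet τ₀ X x ω).Nonempty}).toReal) with h1 | h1
    · exact h1
    · rw [← h1, zero_div] at hx
      exact absurd hx (lt_irrefl _)
  -- the g-limit
  have hipos : (0:ℝ) < i := by exact_mod_cast hi
  have hgy : ∀ y : ℝ, 0 < y →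
      Tendsto (fun x => (P {ω | (exceedSet τ₀ X (x + i*y) ω).Nonempty}).toReal /
        (P {ω | (exceedSet τ₀ X x ω).Nonempty}).toReal) atTop (nhds 1) := by
    intro y hy
    have hc' : (0:ℝ) < (i:ℝ) * y := mul_pos hipos hy
    have h1 : Tendsto (fun x : ℝ =>
        (P {ω | (exceedSet τ₀ X (x + i*y) ω).Nonempty}).toReal / (μ * (1 - F (x + i*y))))
        atTop (nhds 1) :=
      htail.comp (tendsto_atTop_add_const_right atTop ((i:ℝ)*y) tendsto_id)
    have h2 := hlong ((i:ℝ)*y) hc'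
    have h3 : Tendsto (fun x : ℝ =>
        ((P {ω | (exceedSet τ₀ X x ω).Nonempty}).toReal / (μ * (1 - F x)))⁻¹)
        atTop (nhds 1) := by
      have h4 := htail.inv₀ one_ne_zero
      simpa using h4
    have h5 := (h1.mul h2).mul h3
    norm_num at h5
    refine h5.congr (fun x => ?_)
    have hcne : μ * (1 - F (x + i*y)) ≠ 0 := (mul_pos hμ0 (hFpos _)).ne'
    have hdne : μ * (1 - F x) ≠ 0 := (mul_pos hμ0 (hFpos _)).ne'
    have hq : (1 - F (x + ↑i * y)) / (1 - F x)
        = (μ * (1 - F (x + ↑i * y))) / (μ * (1 - F x)) :=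
      (mul_div_mul_left _ _ hμ0.ne').symm
    rw [hq]
    exact aux_cancel _ _ _ _ hcne hdne
  -- p'^i limit
  have hplim : Tendsto (fun n : ℕ => (P (Z 0 ⁻¹' Set.Ici (-(n:ℝ)))).toReal ^ i)
      atTop (nhds 1) := by
    have hmono : Monotone (fun n : ℕ => Z 0 ⁻¹' Set.Ici (-(n:ℝ))) := by
      intro m n hmn ω hω
      simp only [Set.mem_preimage, Set.mem_Ici] at hω ⊢
      have h1 : (m:ℝ) ≤ (n:ℝ) := by exact_mod_cast hmn
      linarith
    have hUniv : (⋃ n : ℕ, Z 0 ⁻¹' Set.Ici (-(n:ℝ))) = Set.univ := by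
      ext ω
      simp only [Set.mem_iUnion, Set.mem_preimage, Set.mem_Ici, Set.mem_univ, iff_true]
      obtain ⟨n, hn⟩ := exists_nat_ge (-(Z 0 ω))
      exact ⟨n, by linarith⟩
    have h := tendsto_measure_iUnion_atTop (μ := P) hmono
    rw [hUniv, measure_univ] at h
    have h2 : Tendsto (fun n : ℕ => (P (Z 0 ⁻¹' Set.Ici (-(n:ℝ)))).toReal) atTop (nhds 1) := by
      have h3 := (ENNReal.tendsto_toReal (by norm_num : (1:ℝ≥0∞) ≠ ⊤)).comp h
      exact h3
    have h4 := h2.pow i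
    simpa using h4
  -- the eventual bound
  have hbound : ∀ y : ℝ, 0 < y → ∀ᶠ x in atTop,
      (P {ω | ((exceedSet τ₀ X x ω).Finite ∧ (exceedSet τ₀ X x ω).ncard ≤ i) ∧
          (exceedSet τ₀ X x ω).Nonempty}).toReal /
        (P {ω | (exceedSet τ₀ X x ω).Nonempty}).toReal
      ≤ 1 - (P (Z 0 ⁻¹' Set.Ici (-y))).toReal ^ i *
          ((P {ω | (exceedSet τ₀ X (x + i*y) ω).Nonempty}).toReal /
            (P {ω | (exceedSet τ₀ X x ω).Nonempty}).toReal) := by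
    intro y hy
    filter_upwards [haev, eventually_ge_atTop (0:ℝ)] with x hax hx0
    have hkey := key x y hx0 hy
    have hkey' : (P (Z 0 ⁻¹' Set.Ici (-y))).toReal ^ i *
        (P {ω | (exceedSet τ₀ X (x + i*y) ω).Nonempty}).toReal
        ≤ (P {ω | ∃ u : Finset ℕ, u.card = i+1 ∧ ↑u ⊆ exceedSet τ₀ X x ω}).toReal := by
      rw [← ENNReal.toReal_pow, ← ENNReal.toReal_mul]
      exact ENNReal.toReal_mono (measure_ne_top P _) hkey
    rw [hsplit x, measure_diff (hEsubN x) (measE x (i+1)).nullMeasurableSet (measure_ne_top P _),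
      ENNReal.toReal_sub_of_le (measure_mono (hEsubN x)) (measure_ne_top P _)]
    set aN := (P {ω | (exceedSet τ₀ X x ω).Nonempty}).toReal
    set aE := (P {ω | ∃ u : Finset ℕ, u.card = i+1 ∧ ↑u ⊆ exceedSet τ₀ X x ω}).toReal
    set aM := (P {ω | (exceedSet τ₀ X (x + i*y) ω).Nonempty}).toReal
    set p' := (P (Z 0 ⁻¹' Set.Ici (-y))).toReal
    have hstep : (aN - aE) / aN ≤ (aN - p'^i * aM) / aN :=
      div_le_div_of_nonneg_right (by linarith) hax.le
    calc (aN - aE) / aN ≤ (aN - p'^i * aM) / aN := hstep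
      _ = 1 - p'^i * (aM / aN) := by
          rw [sub_div, div_self hax.ne', mul_div_assoc]
  -- first limit
  have hfirst : Tendsto
      (fun x : ℝ =>
        (P {ω | ((exceedSet τ₀ X x ω).Finite ∧ (exceedSet τ₀ X x ω).ncard ≤ i) ∧
            (exceedSet τ₀ X x ω).Nonempty}).toReal /
          (P {ω | (exceedSet τ₀ X x ω).Nonempty}).toReal)
      atTop (nhds 0) := by
    rw [tendsto_order]
    constructor
    · intro b hb
      filter_upwards with x
      exact lt_of_lt_of_le hb (div_nonneg ENNReal.toReal_nonneg ENNReal.toReal_nonneg)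
    · intro ε hε
      have hev := (hplim.eventually (eventually_gt_nhds
        (show 1 - ε/2 < 1 by linarith))).and (eventually_ge_atTop 1)
      obtain ⟨n, hn1, hn2⟩ := hev.exists
      have hy : (0:ℝ) < (n:ℝ) := by exact_mod_cast hn2
      have hb := hbound (n:ℝ) hy
      have hg := hgy (n:ℝ) hy
      set p' := (P (Z 0 ⁻¹' Set.Ici (-(n:ℝ)))).toReal
      have hlim2 : Tendsto (fun x : ℝ => 1 - p'^i *
          ((P {ω | (exceedSet τ₀ X (x + i*(n:ℝ)) ω).Nonempty}).toReal /
            (P {ω | (exceedSet τ₀ X x ω).Nonempty}).toReal))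
          atTop (nhds (1 - p'^i * 1)) :=
        tendsto_const_nhds.sub (tendsto_const_nhds.mul hg)
      have hlt : 1 - p'^i * 1 < ε := by
        rw [mul_one]
        linarith
      filter_upwards [hb, hlim2.eventually (eventually_lt_nhds hlt)] with x h1 h2
      exact lt_of_le_of_lt h1 h2
  refine ⟨hfirst, ?_⟩
  -- second limit by squeeze
  refine squeeze_zero (fun x => div_nonneg ENNReal.toReal_nonneg ENNReal.toReal_nonneg)
    (fun x => ?_) hfirst
  have hsub2 : {ω | (exceedSet τ₀ X x ω).Finite ∧ (exceedSet τ₀ X x ω).ncard = i}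
      ⊆ {ω | ((exceedSet τ₀ X x ω).Finite ∧ (exceedSet τ₀ X x ω).ncard ≤ i) ∧
          (exceedSet τ₀ X x ω).Nonempty} := by
    rintro ω ⟨hfin, hcard⟩
    exact ⟨⟨hfin, le_of_eq hcard⟩, Set.nonempty_of_ncard_ne_zero (by omega)⟩
  exact div_le_div_of_nonneg_right
    (ENNReal.toReal_mono (measure_ne_top P _) (measure_mono hsub2)) ENNReal.toReal_nonneg
end

section
/- Let F and H be distribution functions on ℝ with F(x) < 1 and H(x) < 1 for all x ∈ ℝ, and let μ > 0. Suppose (1 − H(x)) / (μ(1 − F(x))) → 1 as x → ∞. Then sup_{x∈ℝ} |H(x)^{n/μ} − F(x)^n| → 0 as n → ∞; that is, the distribution functions G := H^{1/μ} and F are strictly tail-equivalent. -/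
open Filter Topology Real

/-!
Write `F(x)^n = exp(n log F(x))` and `H(x)^{n/μ} = exp(r(x) · n log F(x))` with
`r = log H / (μ log F)`. Since `log y ~ y - 1` as `y → 1`, the tail-ratio hypothesis gives
`r(x) → 1`. Once `|r - 1| ≤ δ ≤ 1/2`, the mean value bound
`|e^{-rs} - e^{-s}| ≤ |r - 1| s e^{-s/2}` and `s e^{-s/2} ≤ 2` bound the difference by `2δ`
uniformly in `n`, for all `x` beyond some `M`. Below `M` the difference is at most
`H(M)^{n/μ} + F(M)^n`, which tends to `0` because `F(M), H(M) < 1`.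
-/

theorem abs_exp_neg_sub_exp_neg_le (a b : ℝ) :
    |exp (-a) - exp (-b)| ≤ |a - b| * exp (-min a b) := by
  wlog h : a ≤ b generalizing a b
  · rw [abs_sub_comm, abs_sub_comm a b, min_comm]
    exact this b a (le_of_not_ge h)
  rw [min_eq_left h, abs_of_nonneg (sub_nonneg.2 (exp_le_exp.2 (neg_le_neg h))),
    abs_of_nonpos (sub_nonpos.2 h)]
  have hsplit : exp (-b) = exp (-a) * exp (a - b) := by rw [← exp_add]; ring_nf
  nlinarith [add_one_le_exp (a - b), exp_pos (-a)]

theorem abs_exp_neg_mul_sub_exp_neg_le {r s δ : ℝ} (hs : 0 ≤ s) (hr : |r - 1| ≤ δ)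
    (hδ : δ ≤ 1 / 2) : |exp (-(r * s)) - exp (-s)| ≤ 2 * δ := by
  have hδ0 : 0 ≤ δ := (abs_nonneg _).trans hr
  have hr2 : 1 / 2 ≤ r := by linarith [(abs_le.1 hr).1]
  have hmin : s / 2 ≤ min (r * s) s := le_min (by nlinarith) (by linarith)
  calc |exp (-(r * s)) - exp (-s)| ≤ |r * s - s| * exp (-min (r * s) s) :=
        abs_exp_neg_sub_exp_neg_le _ _
    _ ≤ δ * s * exp (-(s / 2)) := by
        rw [← sub_one_mul, abs_mul, abs_of_nonneg hs]
        gcongr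
    _ = 2 * δ * (s / 2 * exp (-(s / 2))) := by ring
    _ ≤ 2 * δ * 1 := by
        gcongr
        exact (mul_exp_neg_le_exp_neg_one _).trans (exp_le_one_iff.2 (by norm_num))
    _ = 2 * δ := mul_one _

theorem abs_rpow_div_sub_pow_le {p q μ δ : ℝ} (hp : 0 < p) (hp1 : p < 1) (hq : 0 < q)
    (hδ : δ ≤ 1 / 2) (h : |log q / (μ * log p) - 1| ≤ δ) (n : ℕ) :
    |q ^ ((n : ℝ) / μ) - p ^ n| ≤ 2 * δ := by
  have hlogp : log p ≠ 0 := (log_neg hp hp1).ne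
  -- for `μ = 0` the ratio in `h` is the junk value `0`
  have hμ : μ ≠ 0 := by
    rintro rfl
    norm_num at h
    linarith
  have hq' : q ^ ((n : ℝ) / μ) = exp (-(log q / (μ * log p) * -(n * log p))) := by
    rw [rpow_def_of_pos hq]
    congr 1
    field_simp
  have hp' : p ^ n = exp (-(-(n * log p))) := by
    rw [neg_neg, ← rpow_natCast, rpow_def_of_pos hp, mul_comm]
  rw [hq', hp']
  exact abs_exp_neg_mul_sub_exp_neg_le
    (neg_nonneg.2 (mul_nonpos_of_nonneg_of_nonpos n.cast_nonneg (log_nonpos hp.le hp1.le))) h hδ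

theorem tendsto_log_div_sub_one : Tendsto (fun y => log y / (y - 1)) (𝓝[≠] 1) (𝓝 1) := by
  have h := hasDerivAt_log one_ne_zero
  rw [hasDerivAt_iff_tendsto_slope, inv_one] at h
  convert h using 1
  ext y
  simp [slope_def_field]

theorem tendsto_log_div_mul_log_of_tendsto_tail_ratio {α : Type*} {l : Filter α} {F H : α → ℝ}
    {μ : ℝ} (hF : Tendsto F l (𝓝 1)) (hH : Tendsto H l (𝓝 1)) (hF1 : ∀ᶠ x in l, F x ≠ 1)
    (hH1 : ∀ᶠ x in l, H x ≠ 1)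
    (htail : Tendsto (fun x => (1 - H x) / (μ * (1 - F x))) l (𝓝 1)) :
    Tendsto (fun x => log (H x) / (μ * log (F x))) l (𝓝 1) := by
  have hlogF := tendsto_log_div_sub_one.comp (tendsto_nhdsWithin_iff.2 ⟨hF, hF1⟩)
  have hlogH := tendsto_log_div_sub_one.comp (tendsto_nhdsWithin_iff.2 ⟨hH, hH1⟩)
  have hlim := (hlogH.mul htail).div hlogF one_ne_zero
  rw [mul_one, div_one] at hlim
  refine hlim.congr' ?_
  filter_upwards [hF1, hH1] with x hFx hHx
  have hFx' : F x - 1 ≠ 0 := sub_ne_zero.2 hFx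
  have hHx' : H x - 1 ≠ 0 := sub_ne_zero.2 hHx
  simp only [Pi.div_apply, Function.comp_apply]
  rw [← neg_sub (H x), ← neg_sub (F x)]
  field_simp

theorem tendsto_iSup_nhds_zero_of_forall_le_add {ι : Type*} {f : ℕ → ι → ℝ}
    (hf : ∀ n i, 0 ≤ f n i)
    (h : ∀ ε > 0, ∃ g : ℕ → ℝ, Tendsto g atTop (𝓝 0) ∧ ∀ n i, f n i ≤ g n + ε) :
    Tendsto (fun n => ⨆ i, f n i) atTop (𝓝 0) := by
  refine tendsto_order.2 ⟨fun a ha => .of_forall fun n => ha.trans_le (iSup_nonneg (hf n)),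
    fun a ha => ?_⟩
  obtain ⟨g, hg, hfg⟩ := h (a / 2) (half_pos ha)
  filter_upwards [(tendsto_order.1 hg).2 (a / 2) (half_pos ha)] with n hn
  refine (Real.iSup_le (fun i => (hfg n i).trans (le_max_left _ 0)) (le_max_right _ _)).trans_lt ?_
  exact max_lt (by linarith) ha

theorem abs_rpow_sub_pow_le_of_le {F H : ℝ → ℝ} (hF : Monotone F) (hH : Monotone H)
    (hF0 : ∀ x, 0 ≤ F x) (hH0 : ∀ x, 0 ≤ H x) {x M : ℝ} (hx : x ≤ M) {t : ℝ} (ht : 0 ≤ t)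
    (n : ℕ) : |H x ^ t - F x ^ n| ≤ H M ^ t + F M ^ n := by
  have hHt : 0 ≤ H x ^ t := rpow_nonneg (hH0 x) t
  have hFn : 0 ≤ F x ^ n := pow_nonneg (hF0 x) n
  calc |H x ^ t - F x ^ n| ≤ H x ^ t + F x ^ n := abs_le.2 ⟨by linarith, by linarith⟩
    _ ≤ H M ^ t + F M ^ n := by
        gcongr
        exacts [hH0 x, hH hx, hF0 x, hF hx]

theorem strictly_tail_equivalent_of_tail_ratio_general
    (F H : ℝ → ℝ)
    (hFmono : Monotone F) (hHmono : Monotone H)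
    (hFbot : Tendsto F atBot (nhds 0)) (hFtop : Tendsto F atTop (nhds 1))
    (hHbot : Tendsto H atBot (nhds 0)) (hHtop : Tendsto H atTop (nhds 1))
    (hFlt : ∀ x, F x < 1) (hHlt : ∀ x, H x < 1)
    (μ : ℝ) (hμ : 0 < μ)
    (htail : Tendsto (fun x => (1 - H x) / (μ * (1 - F x))) atTop (nhds 1)) :
    Tendsto (fun n : ℕ => ⨆ x : ℝ, |H x ^ ((n : ℝ) / μ) - F x ^ n|) atTop (nhds 0) := by
  have hF0 := hFmono.le_of_tendsto hFbot
  have hH0 := hHmono.le_of_tendsto hHbot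
  have hratio := tendsto_log_div_mul_log_of_tendsto_tail_ratio hFtop hHtop
    (.of_forall fun x => (hFlt x).ne) (.of_forall fun x => (hHlt x).ne) htail
  refine tendsto_iSup_nhds_zero_of_forall_le_add (fun _ _ => abs_nonneg _) fun ε hε => ?_
  obtain ⟨δ, hδ, hδ_half, hδε⟩ : ∃ δ : ℝ, 0 < δ ∧ δ ≤ 1 / 2 ∧ 2 * δ ≤ ε :=
    ⟨min (1 / 2) (ε / 2), lt_min one_half_pos (half_pos hε), min_le_left _ _,
      by linarith [min_le_right (1 / 2) (ε / 2)]⟩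
  obtain ⟨M, hM⟩ : ∃ M, ∀ x ≥ M,
      0 < F x ∧ 0 < H x ∧ |log (H x) / (μ * log (F x)) - 1| ≤ δ :=
    eventually_atTop.1 <| (hFtop.eventually (lt_mem_nhds one_pos)).and <|
      (hHtop.eventually (lt_mem_nhds one_pos)).and
        (hratio.eventually (Metric.closedBall_mem_nhds 1 hδ))
  have hg : Tendsto (fun n : ℕ => H M ^ ((n : ℝ) / μ) + F M ^ n) atTop (𝓝 0) := by
    simpa using ((tendsto_rpow_atTop_of_base_lt_one _ (by linarith [hH0 M]) (hHlt M)).comp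
      (tendsto_natCast_atTop_atTop.atTop_div_const hμ)).add
      (tendsto_pow_atTop_nhds_zero_of_lt_one (hF0 M) (hFlt M))
  refine ⟨_, hg, fun n x => ?_⟩
  have hnμ : 0 ≤ (n : ℝ) / μ := by positivity
  have hg0 := (abs_nonneg _).trans
    (abs_rpow_sub_pow_le_of_le hFmono hHmono hF0 hH0 (le_refl M) hnμ n)
  rcases le_total x M with hx | hx
  · linarith [abs_rpow_sub_pow_le_of_le hFmono hHmono hF0 hH0 hx hnμ n]
  · obtain ⟨hFx, hHx, hrx⟩ := hM x hx
    linarith [abs_rpow_div_sub_pow_le hFx (hFlt x) hHx hδ_half hrx n]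

/-- If `F` and `H` are distribution functions with `F(x) < 1`, `H(x) < 1`
for all `x`, `μ > 0`, and `(1 - H(x)) / (μ (1 - F(x))) → 1` as `x → ∞`, then
`sup_x |H(x)^{n/μ} - F(x)^n| → 0` as `n → ∞`, i.e. `H^{1/μ}` and `F` are strictly
tail-equivalent. -/
theorem strictly_tail_equivalent_of_tail_ratio
    (F H : ℝ → ℝ)
    (hFmono : Monotone F) (hHmono : Monotone H)
    (hFrc : ∀ x, ContinuousWithinAt F (Set.Ici x) x)
    (hHrc : ∀ x, ContinuousWithinAt H (Set.Ici x) x)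
    (hFbot : Tendsto F atBot (nhds 0)) (hFtop : Tendsto F atTop (nhds 1))
    (hHbot : Tendsto H atBot (nhds 0)) (hHtop : Tendsto H atTop (nhds 1))
    (hFlt : ∀ x, F x < 1) (hHlt : ∀ x, H x < 1)
    (μ : ℝ) (hμ : 0 < μ)
    (htail : Tendsto (fun x => (1 - H x) / (μ * (1 - F x))) atTop (nhds 1)) :
    Tendsto (fun n : ℕ => ⨆ x : ℝ, |H x ^ ((n : ℝ) / μ) - F x ^ n|) atTop (nhds 0) :=
  strictly_tail_equivalent_of_tail_ratio_general F H hFmono hHmono hFbot hFtop hHbot hHtop hFlt hHlt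
    μ hμ htail
end

section
/- Let F : ℝ → [0,1] be a distribution function with F(x) < 1 for all x ∈ ℝ, and let (m_n)_{n≥1} be a nondecreasing sequence of positive integers such that (1 − F(n + m_n))/(1 − F(n)) → 1 as n → ∞. Define (v_n)_{n≥1} recursively by v_1 := 1 and v_{n+1} := v_n + m_{v_n}, and for x ≥ 1 set n(x) := min{n ∈ ℕ_+ : v_n > x}. Let g : [1,∞) → ℝ be any function satisfying 1 − F(v_{n(x)+1}) ≤ g(x) ≤ 1 − F(v_{n(x)}) for all x ≥ 1. Then g(x)/(1 − F(x)) → 1 as x → ∞. -/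
/-!
Write `G = 1 - F` and `k = n(x) - 1`, so that `v_k ≤ x < v_{k+1}` and `g` lies between
`G(v_{k+2})` and `G(v_{k+1})`. Since `G` is antitone, `g(x)/G(x)` is at most `1` and at least
`G(v_{k+2}) / G(v_k)`, a product of two consecutive ratios `G(v_{j+1}) / G(v_j)`. Those ratios are
`G(v_j + m_{v_j}) / G(v_j)`, which tend to `1` by the hypothesis on `m` because `v_j → ∞`, and
`k → ∞` as `x → ∞`.
-/

open Filter Topology

/-- The paper's `n(x)` for `u = v`; it is `0` when no `u n` exceeds `x`. -/
noncomputable def firstIndexAbove (u : ℕ → ℝ) (x : ℝ) : ℕ :=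
  sInf {n : ℕ | 1 ≤ n ∧ x < u n}

section FirstIndexAbove

variable {u : ℕ → ℝ}

theorem one_le_firstIndexAbove_and_lt (hu : Tendsto u atTop atTop) (x : ℝ) :
    1 ≤ firstIndexAbove u x ∧ x < u (firstIndexAbove u x) :=
  Nat.sInf_mem ((eventually_ge_atTop 1).and (hu.eventually_gt_atTop x)).exists

theorem le_of_lt_firstIndexAbove {x : ℝ} {n : ℕ} (hn : 1 ≤ n) (h : n < firstIndexAbove u x) :
    u n ≤ x := by
  by_contra! hx
  exact Nat.notMem_of_lt_sInf h ⟨hn, hx⟩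

theorem two_le_firstIndexAbove (hu : Tendsto u atTop atTop) {x : ℝ} (hx : u 1 ≤ x) :
    2 ≤ firstIndexAbove u x := by
  obtain ⟨hone, hlt⟩ := one_le_firstIndexAbove_and_lt hu x
  by_contra! h
  rw [show firstIndexAbove u x = 1 by omega] at hlt
  linarith

theorem apply_pred_firstIndexAbove_le (hu : Tendsto u atTop atTop) {x : ℝ} (hx : u 1 ≤ x) :
    u (firstIndexAbove u x - 1) ≤ x := by
  have := two_le_firstIndexAbove hu hx
  exact le_of_lt_firstIndexAbove (by omega) (by omega)

/-- Past the maximum of `u 1, …, u M`, the first index above `x` exceeds `M`. -/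
theorem tendsto_firstIndexAbove (hu : Tendsto u atTop atTop) :
    Tendsto (firstIndexAbove u) atTop atTop := by
  refine tendsto_atTop_atTop.2 fun M => ?_
  obtain ⟨B, hB⟩ := ((Set.finite_le_nat M).image u).bddAbove
  refine ⟨B, fun x hx => ?_⟩
  by_contra! h
  have hlt := (one_le_firstIndexAbove_and_lt hu x).2
  linarith [hB ⟨_, h.le, rfl⟩]

end FirstIndexAbove

theorem tendsto_div_add_two_of_tendsto_div_add_one {K : Type*} [Field K] [TopologicalSpace K]
    [ContinuousMul K] {a : ℕ → K} (ha : ∀ n, a n ≠ 0)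
    (h : Tendsto (fun n => a (n + 1) / a n) atTop (𝓝 1)) :
    Tendsto (fun n => a (n + 2) / a n) atTop (𝓝 1) := by
  have := (h.comp (tendsto_add_atTop_nat 1)).mul h
  rw [one_mul] at this
  refine this.congr fun n => ?_
  exact div_mul_div_cancel₀ (ha (n + 1))

theorem tendsto_div_of_sandwich {G g : ℝ → ℝ} {u : ℕ → ℝ} {k : ℝ → ℕ}
    (hG : Antitone G) (hGpos : ∀ x, 0 < G x)
    (hratio : Tendsto (fun n => G (u (n + 1)) / G (u n)) atTop (𝓝 1))
    (hk : Tendsto k atTop atTop)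
    (hxu : ∀ᶠ x in atTop, u (k x) ≤ x ∧ x ≤ u (k x + 1))
    (hg : ∀ᶠ x in atTop, G (u (k x + 2)) ≤ g x ∧ g x ≤ G (u (k x + 1))) :
    Tendsto (fun x => g x / G x) atTop (𝓝 1) := by
  have hlower : Tendsto (fun x => G (u (k x + 2)) / G (u (k x))) atTop (𝓝 1) :=
    (tendsto_div_add_two_of_tendsto_div_add_one (fun n => (hGpos _).ne') hratio).comp hk
  refine tendsto_of_tendsto_of_tendsto_of_le_of_le' hlower tendsto_const_nhds ?_ ?_
  · filter_upwards [hxu, hg] with x ⟨hux, _⟩ ⟨hgx, _⟩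
    exact div_le_div₀ ((hGpos _).le.trans hgx) hgx (hGpos x) (hG hux)
  · filter_upwards [hxu, hg] with x ⟨_, hxu⟩ ⟨_, hgx⟩
    rw [div_le_one (hGpos x)]
    exact hgx.trans (hG hxu)

theorem tendsto_div_of_le_firstIndexAbove {G g : ℝ → ℝ} {u : ℕ → ℝ}
    (hG : Antitone G) (hGpos : ∀ x, 0 < G x) (hu : Tendsto u atTop atTop)
    (hratio : Tendsto (fun n => G (u (n + 1)) / G (u n)) atTop (𝓝 1))
    (hg : ∀ᶠ x in atTop,
      G (u (firstIndexAbove u x + 1)) ≤ g x ∧ g x ≤ G (u (firstIndexAbove u x))) :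
    Tendsto (fun x => g x / G x) atTop (𝓝 1) := by
  have hN (x : ℝ) : ∃ j, firstIndexAbove u x = j + 1 :=
    Nat.exists_eq_add_of_le' (one_le_firstIndexAbove_and_lt hu x).1
  refine tendsto_div_of_sandwich hG hGpos hratio (k := fun x => firstIndexAbove u x - 1)
    ((tendsto_sub_atTop_nat 1).comp (tendsto_firstIndexAbove hu)) ?_ ?_
  · filter_upwards [eventually_ge_atTop (u 1)] with x hx
    have hlt := (one_le_firstIndexAbove_and_lt hu x).2
    have hle := apply_pred_firstIndexAbove_le hu hx
    obtain ⟨j, hj⟩ := hN x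
    rw [hj] at hlt hle ⊢
    exact ⟨hle, hlt.le⟩
  · filter_upwards [hg] with x hgx
    obtain ⟨j, hj⟩ := hN x
    simpa only [hj, Nat.add_sub_cancel, add_assoc] using hgx

theorem tendsto_atTop_of_lt_succ {v : ℕ → ℕ} (hv : ∀ n, 1 ≤ n → v n < v (n + 1)) :
    Tendsto v atTop atTop :=
  (tendsto_add_atTop_iff_nat 1).1 <| StrictMono.tendsto_atTop <|
    strictMono_nat_of_lt_succ fun n => hv (n + 1) n.succ_pos

theorem sandwiched_tail_equivalent_general
    (F : ℝ → ℝ)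
    (hFmono : Monotone F)
    (hFlt : ∀ x, F x < 1)
    (m : ℕ → ℕ) (hm1 : ∀ n, 1 ≤ m n)
    (hmF : Tendsto (fun n : ℕ => (1 - F ((n : ℝ) + (m n : ℝ))) / (1 - F (n : ℝ)))
      atTop (nhds 1))
    (v : ℕ → ℕ) (hvrec : ∀ n, 1 ≤ n → v (n + 1) = v n + m (v n))
    (nx : ℝ → ℕ) (hnx : ∀ x, nx x = sInf {n : ℕ | 1 ≤ n ∧ x < (v n : ℝ)})
    (g : ℝ → ℝ)
    (hg : ∀ x, 1 ≤ x → 1 - F (v (nx x + 1)) ≤ g x ∧ g x ≤ 1 - F (v (nx x))) :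
    Tendsto (fun x => g x / (1 - F x)) atTop (nhds 1) := by
  obtain rfl : nx = firstIndexAbove (fun n => (v n : ℝ)) := funext hnx
  have hv : Tendsto v atTop atTop := tendsto_atTop_of_lt_succ fun n hn => by
    rw [hvrec n hn]
    linarith [hm1 (v n)]
  have hratio : Tendsto (fun n => (1 - F (v (n + 1))) / (1 - F (v n))) atTop (𝓝 1) := by
    refine (hmF.comp hv).congr' ?_
    filter_upwards [eventually_ge_atTop 1] with n hn
    simp only [Function.comp_apply, hvrec n hn, Nat.cast_add]
  exact tendsto_div_of_le_firstIndexAbove (G := fun x => 1 - F x)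
    (fun a b hab => sub_le_sub_left (hFmono hab) 1) (fun x => sub_pos.2 (hFlt x))
    (tendsto_natCast_atTop_atTop.comp hv) hratio
    (eventually_ge_atTop 1 |>.mono hg)

/-- Let `F` be a distribution function with `F(x) < 1` for all `x`, and
`(m_n)` a nondecreasing sequence of positive integers with
`(1 - F(n + m_n)) / (1 - F(n)) → 1`.  Define `v_1 = 1`, `v_{n+1} = v_n + m_{v_n}` and
`n(x) := min {n ≥ 1 : v_n > x}`.  If `g : [1,∞) → ℝ` satisfies
`1 - F(v_{n(x)+1}) ≤ g(x) ≤ 1 - F(v_{n(x)})` for all `x ≥ 1`, then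
`g(x) / (1 - F(x)) → 1` as `x → ∞`. -/
theorem sandwiched_tail_equivalent
    (F : ℝ → ℝ)
    (hFmono : Monotone F)
    (hFrc : ∀ x, ContinuousWithinAt F (Set.Ici x) x)
    (hFbot : Tendsto F atBot (nhds 0)) (hFtop : Tendsto F atTop (nhds 1))
    (hFlt : ∀ x, F x < 1)
    (m : ℕ → ℕ) (hm1 : ∀ n, 1 ≤ m n) (hmmono : Monotone m)
    (hmF : Tendsto (fun n : ℕ => (1 - F ((n : ℝ) + (m n : ℝ))) / (1 - F (n : ℝ)))
      atTop (nhds 1))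
    (v : ℕ → ℕ) (hv1 : v 1 = 1) (hvrec : ∀ n, 1 ≤ n → v (n + 1) = v n + m (v n))
    (nx : ℝ → ℕ) (hnx : ∀ x, nx x = sInf {n : ℕ | 1 ≤ n ∧ x < (v n : ℝ)})
    (g : ℝ → ℝ)
    (hg : ∀ x, 1 ≤ x → 1 - F (v (nx x + 1)) ≤ g x ∧ g x ≤ 1 - F (v (nx x))) :
    Tendsto (fun x => g x / (1 - F x)) atTop (nhds 1) :=
  sandwiched_tail_equivalent_general F hFmono hFlt m hm1 hmF v hvrec nx hnx g hg
end
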